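/- arXiv:1805.06815 — 7 statements merged into one kernel-verified Lean document; each statement's English description precedes it below -/
import Mathlib

section
/- Fix N ≥ 1 and molar masses M_1,…,M_{N+1} > 0. For ρ' = (ρ_1,…,ρ_N) in the open simplex S = {ρ' ∈ (0,1)^N : Σ_{i=1}^N ρ_i < 1}, the entropy density h is differentiable on S and its partial derivatives are given by ∂h(ρ')/∂ρ_i = (ln x_i)/M_i − (ln x_{N+1})/M_{N+1} for i = 1,…,N; that is, the entropy variables w_i are the partial derivatives of h. -/
/-!
Write `u_k = ρ_k / M_k` for all `N + 1` species (with `ρ_{N+1} = 1 - Σ ρ_i`), so that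
`c = s := Σ u_k`, `x_k = u_k / s` and `h = Σ u_k log (u_k / s) = Σ ψ(u_k) - ψ(s)` with
`ψ(t) = t log t`. Since `ds = Σ du_k`, the `+1` in `ψ' = log + 1` cancels and
`dh = Σ log x_k du_k`; as `∂_i u_i = 1/M_i`, `∂_i u_{N+1} = -1/M_{N+1}` and the other `u_k`
do not depend on `ρ_i`, this is `w_i`.
-/

theorem HasFDerivAt.sum_mul_log_div_sum {E ι : Type*} [NormedAddCommGroup E] [NormedSpace ℝ E]
    [Fintype ι] {u : ι → E → ℝ} {L : ι → E →L[ℝ] ℝ} {ρ : E}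
    (hu : ∀ k, HasFDerivAt (u k) (L k) ρ) (hu0 : ∀ k, u k ρ ≠ 0) (hs : ∑ k, u k ρ ≠ 0) :
    HasFDerivAt (fun y => ∑ k, u k y * Real.log (u k y / ∑ j, u j y))
      (∑ k, Real.log (u k ρ / ∑ j, u j ρ) • L k) ρ := by
  have hsum : HasFDerivAt (fun y => ∑ j, u j y) (∑ j, L j) ρ := HasFDerivAt.fun_sum fun j _ => hu j
  have hψ : HasFDerivAt (fun y => ∑ k, u k y * Real.log (u k y)
      - (∑ j, u j y) * Real.log (∑ j, u j y))
      (∑ k, (Real.log (u k ρ) + 1) • L k - (Real.log (∑ j, u j ρ) + 1) • ∑ j, L j) ρ :=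
    (HasFDerivAt.fun_sum fun k _ => (Real.hasDerivAt_mul_log (hu0 k)).comp_hasFDerivAt ρ (hu k)).sub
      ((Real.hasDerivAt_mul_log hs).comp_hasFDerivAt (f := fun y => ∑ j, u j y) ρ hsum)
  have heq : (fun y => ∑ k, u k y * Real.log (u k y / ∑ j, u j y)) =ᶠ[nhds ρ]
      fun y => ∑ k, u k y * Real.log (u k y) - (∑ j, u j y) * Real.log (∑ j, u j y) := by
    filter_upwards [hsum.continuousAt.eventually_ne hs] with y hy
    have hterm : ∀ k, u k y * Real.log (u k y / ∑ j, u j y)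
        = u k y * Real.log (u k y) - u k y * Real.log (∑ j, u j y) := by
      intro k
      rcases eq_or_ne (u k y) 0 with h0 | h0
      · simp [h0]
      · rw [Real.log_div h0 hy, mul_sub]
    simp only [hterm, Finset.sum_sub_distrib, Finset.sum_mul]
  refine (hψ.congr_of_eventuallyEq heq).congr_fderiv ?_
  ext v
  simp only [sub_apply, sum_apply, smul_apply, smul_eq_mul, Real.log_div (hu0 _) hs,
    Finset.mul_sum, add_mul, sub_mul, one_mul, Finset.sum_add_distrib, Finset.sum_sub_distrib]
  ring

section MassFractions

variable {N : ℕ}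

def massFractions (ρ : EuclideanSpace ℝ (Fin N)) : Fin (N + 1) → ℝ :=
  Fin.snoc (fun i => ρ i) (1 - ∑ i, ρ i)

noncomputable def massFractionsDeriv : Fin (N + 1) → EuclideanSpace ℝ (Fin N) →L[ℝ] ℝ :=
  Fin.snoc (fun i => EuclideanSpace.proj (𝕜 := ℝ) i) (-∑ i, EuclideanSpace.proj (𝕜 := ℝ) i)

theorem massFractions_pos {ρ : EuclideanSpace ℝ (Fin N)} (hρ : ∀ i, 0 < ρ i) (hsum : ∑ i, ρ i < 1)
    (k : Fin (N + 1)) : 0 < massFractions ρ k := by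
  induction k using Fin.lastCases with
  | last => simpa [massFractions] using hsum
  | cast i => simpa [massFractions] using hρ i

theorem hasFDerivAt_massFractions (ρ : EuclideanSpace ℝ (Fin N)) (k : Fin (N + 1)) :
    HasFDerivAt (fun ρ => massFractions ρ k) (massFractionsDeriv k) ρ := by
  induction k using Fin.lastCases with
  | last =>
    simp only [massFractions, massFractionsDeriv, Fin.snoc_last]
    refine ((hasFDerivAt_const 1 ρ).sub (HasFDerivAt.fun_sum fun i _ =>
      (EuclideanSpace.proj (𝕜 := ℝ) i).hasFDerivAt)).congr_fderiv ?_
    exact zero_sub _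
  | cast i =>
    simp only [massFractions, massFractionsDeriv, Fin.snoc_castSucc]
    exact (EuclideanSpace.proj (𝕜 := ℝ) i).hasFDerivAt

theorem sum_mul_massFractionsDeriv_single (a : Fin (N + 1) → ℝ) (i : Fin N) :
    ∑ k, a k * massFractionsDeriv k (EuclideanSpace.single i 1) =
      a i.castSucc - a (Fin.last N) := by
  simp [Fin.sum_univ_castSucc, massFractionsDeriv, sub_eq_add_neg]

end MassFractions

theorem stmt3_general (N : ℕ) (M : Fin (N + 1) → ℝ) (hM : ∀ i, 0 < M i) :
    let S : Set (EuclideanSpace ℝ (Fin N)) :=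
      {ρ | (∀ i, 0 < ρ i ∧ ρ i < 1) ∧ ∑ i, ρ i < 1}
    let c : EuclideanSpace ℝ (Fin N) → ℝ := fun ρ =>
      (∑ i, ρ i / M i.castSucc) + (1 - ∑ i, ρ i) / M (Fin.last N)
    let x : EuclideanSpace ℝ (Fin N) → Fin N → ℝ := fun ρ i => ρ i / (c ρ * M i.castSucc)
    let xlast : EuclideanSpace ℝ (Fin N) → ℝ := fun ρ =>
      (1 - ∑ i, ρ i) / (c ρ * M (Fin.last N))
    let h : EuclideanSpace ℝ (Fin N) → ℝ := fun ρ =>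
      (∑ i, (ρ i / M i.castSucc) * Real.log (x ρ i))
        + ((1 - ∑ i, ρ i) / M (Fin.last N)) * Real.log (xlast ρ)
    let w : EuclideanSpace ℝ (Fin N) → Fin N → ℝ := fun ρ i =>
      Real.log (x ρ i) / M i.castSucc - Real.log (xlast ρ) / M (Fin.last N)
    ∀ ρ ∈ S, DifferentiableAt ℝ h ρ ∧
      ∀ i, fderiv ℝ h ρ (EuclideanSpace.single i 1) = w ρ i := by
  intro S c x xlast h w ρ hρ
  set u : Fin (N + 1) → EuclideanSpace ℝ (Fin N) → ℝ := fun k ρ => massFractions ρ k / M k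
  have hc : ∀ ρ, c ρ = ∑ k, u k ρ := fun ρ => by
    simp [c, u, massFractions, Fin.sum_univ_castSucc]
  have hh : h = fun ρ => ∑ k, u k ρ * Real.log (u k ρ / ∑ j, u j ρ) := by
    funext ρ
    simp only [h, x, xlast, div_mul_eq_div_div_swap, hc]
    simp only [u, massFractions, Fin.sum_univ_castSucc, Fin.snoc_castSucc, Fin.snoc_last]
  have hu : ∀ k, HasFDerivAt (u k) ((M k)⁻¹ • massFractionsDeriv k) ρ := fun k => by
    simpa only [u, div_eq_mul_inv, smul_eq_mul, mul_comm] using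
      (hasFDerivAt_massFractions ρ k).mul_const (M k)⁻¹
  have hpos : ∀ k, 0 < u k ρ := fun k =>
    div_pos (massFractions_pos (fun i => (hρ.1 i).1) hρ.2 k) (hM k)
  have hD := HasFDerivAt.sum_mul_log_div_sum hu (fun k => (hpos k).ne')
    (Finset.sum_pos (fun k _ => hpos k) Finset.univ_nonempty).ne'
  rw [← hh] at hD
  refine ⟨hD.differentiableAt, fun i => ?_⟩
  rw [hD.fderiv]
  simp only [sum_apply, smul_apply, smul_eq_mul, ← mul_assoc, sum_mul_massFractionsDeriv_single]
  simp only [w, x, xlast, div_mul_eq_div_div_swap, hc, u, massFractions, Fin.snoc_castSucc,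
    Fin.snoc_last, div_eq_mul_inv (Real.log _)]

/-- The entropy variables `w_i = (ln x_i)/M_i − (ln x_{N+1})/M_{N+1}` are the partial
derivatives of the entropy density `h` on the open simplex. -/
theorem stmt3 (N : ℕ) (hN : 1 ≤ N) (M : Fin (N + 1) → ℝ) (hM : ∀ i, 0 < M i) :
    let S : Set (EuclideanSpace ℝ (Fin N)) :=
      {ρ | (∀ i, 0 < ρ i ∧ ρ i < 1) ∧ ∑ i, ρ i < 1}
    let c : EuclideanSpace ℝ (Fin N) → ℝ := fun ρ =>
      (∑ i, ρ i / M i.castSucc) + (1 - ∑ i, ρ i) / M (Fin.last N)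
    let x : EuclideanSpace ℝ (Fin N) → Fin N → ℝ := fun ρ i => ρ i / (c ρ * M i.castSucc)
    let xlast : EuclideanSpace ℝ (Fin N) → ℝ := fun ρ =>
      (1 - ∑ i, ρ i) / (c ρ * M (Fin.last N))
    let h : EuclideanSpace ℝ (Fin N) → ℝ := fun ρ =>
      (∑ i, (ρ i / M i.castSucc) * Real.log (x ρ i))
        + ((1 - ∑ i, ρ i) / M (Fin.last N)) * Real.log (xlast ρ)
    let w : EuclideanSpace ℝ (Fin N) → Fin N → ℝ := fun ρ i =>
      Real.log (x ρ i) / M i.castSucc - Real.log (xlast ρ) / M (Fin.last N)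
    ∀ ρ ∈ S, DifferentiableAt ℝ h ρ ∧
      ∀ i, fderiv ℝ h ρ (EuclideanSpace.single i 1) = w ρ i :=
  stmt3_general N M hM
end

section
/- Fix N ≥ 1 and molar masses M_1,…,M_{N+1} > 0. For ρ' in the open simplex S, the entropy density h is twice differentiable and its Hessian satisfies, for i, j = 1,…,N: ∂²h(ρ')/∂ρ_i∂ρ_j = ∂w_i/∂ρ_j = δ_{ij}/(M_i ρ_i) + 1/(M_{N+1} ρ_{N+1}) − (1/c)·(1/M_i − 1/M_{N+1})·(1/M_j − 1/M_{N+1}), where δ_{ij} is the Kronecker delta. -/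
/-!
With `a_k = ρ_k / M_k` for `k ≤ N + 1` one has `c = ∑ a_k` and `c x_k = a_k`, so
`h = ∑ φ(a_k) − φ(c)` with `φ t = t ln t`, where every `a_k` and `c` is affine in `ρ'`.
The chain rule then gives `∂_i h = w_i`, and differentiating `w_i = ∑ ∂_i a_k ln a_k − ∂_i c ln c`
once more yields `∑ ∂_i a_k ∂_j a_k / a_k − ∂_i c ∂_j c / c`, which is the claimed Hessian since
`∂_j a_k = δ_{jk} / M_k`, `∂_j a_{N+1} = −1 / M_{N+1}` and `∂_j c = 1 / M_j − 1 / M_{N+1}`.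
-/

open Real EuclideanSpace

noncomputable section

namespace Multicomponent

variable {N : ℕ}

local notation "projℝ" => EuclideanSpace.proj (𝕜 := ℝ)

@[simp]
lemma sum_smul_proj_apply_single (a : Fin N → ℝ) (j : Fin N) :
    (∑ k, a k • projℝ k) (single j 1) = a j := by
  simp

lemma eq_sum_smul_proj (L : EuclideanSpace ℝ (Fin N) →L[ℝ] ℝ) :
    L = ∑ j, L (single j 1) • projℝ j := by
  ext1 v
  conv_lhs => rw [← (basisFun (Fin N) ℝ).sum_repr v]
  simp [map_sum, mul_comm]

lemma _root_.HasFDerivAt.mul_log {E : Type*} [NormedAddCommGroup E] [NormedSpace ℝ E]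
    {f : E → ℝ} {f' : E →L[ℝ] ℝ} {x : E} (hf : HasFDerivAt f f' x) (hx : f x ≠ 0) :
    HasFDerivAt (fun y => f y * log (f y)) ((log (f x) + 1) • f') x :=
  (hasDerivAt_mul_log hx).comp_hasFDerivAt x hf

lemma _root_.HasFDerivAt.sum_smul_proj_of_apply_single {f : EuclideanSpace ℝ (Fin N) → ℝ}
    {L : EuclideanSpace ℝ (Fin N) →L[ℝ] ℝ} {σ : EuclideanSpace ℝ (Fin N)}
    (hf : HasFDerivAt f L σ) {a : Fin N → ℝ} (ha : ∀ j, L (single j 1) = a j) :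
    HasFDerivAt f (∑ j, a j • projℝ j) σ := by
  rw [eq_sum_smul_proj L] at hf
  simpa only [ha] using hf

def openSimplex (N : ℕ) : Set (EuclideanSpace ℝ (Fin N)) :=
  {ρ | (∀ i, 0 < ρ i ∧ ρ i < 1) ∧ ∑ i, ρ i < 1}

lemma isOpen_openSimplex : IsOpen (openSimplex N) := by
  have hproj : ∀ i, Continuous fun ρ : EuclideanSpace ℝ (Fin N) => ρ i :=
    fun i => (projℝ i).continuous
  simp only [openSimplex, Set.ofPred_and, Set.ofPred_forall]
  exact (isOpen_iInter_of_finite fun i => (isOpen_lt continuous_const (hproj i)).inter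
    (isOpen_lt (hproj i) continuous_const)).inter
    (isOpen_lt (continuous_finsetSum _ fun i _ => hproj i) continuous_const)

/-- The mass fraction `ρ_{N+1}`. -/
def lastFraction (ρ : EuclideanSpace ℝ (Fin N)) : ℝ := 1 - ∑ i, ρ i

lemma hasFDerivAt_lastFraction (σ : EuclideanSpace ℝ (Fin N)) :
    HasFDerivAt lastFraction (∑ j, (-1 : ℝ) • projℝ j) σ := by
  have := (HasFDerivAt.fun_sum (u := Finset.univ) fun k _ =>
    (projℝ k).hasFDerivAt (x := σ)).const_sub 1
  exact this.sum_smul_proj_of_apply_single fun j => by simp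

lemma lastFraction_pos {ρ : EuclideanSpace ℝ (Fin N)} (hρ : ρ ∈ openSimplex N) :
    0 < lastFraction ρ :=
  sub_pos.2 hρ.2

variable (M : Fin (N + 1) → ℝ)

lemma hasFDerivAt_coord_div (k : Fin N) (σ : EuclideanSpace ℝ (Fin N)) :
    HasFDerivAt (fun ρ : EuclideanSpace ℝ (Fin N) => ρ k / M k.castSucc)
      (∑ j, (if k = j then 1 / M k.castSucc else 0) • projℝ j) σ := by
  have := ((projℝ k).hasFDerivAt (x := σ)).mul_const (M k.castSucc)⁻¹
  simp only [← div_eq_mul_inv] at this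
  exact HasFDerivAt.sum_smul_proj_of_apply_single this fun j => by simp

lemma hasFDerivAt_lastFraction_div (σ : EuclideanSpace ℝ (Fin N)) :
    HasFDerivAt (fun ρ => lastFraction ρ / M (Fin.last N))
      (∑ j, (-1 / M (Fin.last N)) • projℝ j) σ := by
  have := (hasFDerivAt_lastFraction σ).mul_const (M (Fin.last N))⁻¹
  simp only [← div_eq_mul_inv] at this
  exact HasFDerivAt.sum_smul_proj_of_apply_single this fun j => by simp [div_eq_mul_inv]

/-- The total concentration `c = ∑_{k ≤ N+1} ρ_k / M_k`. -/
def totalConc (ρ : EuclideanSpace ℝ (Fin N)) : ℝ :=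
  ∑ i, ρ i / M i.castSucc + lastFraction ρ / M (Fin.last N)

lemma hasFDerivAt_totalConc (σ : EuclideanSpace ℝ (Fin N)) :
    HasFDerivAt (totalConc M)
      (∑ j, (1 / M j.castSucc - 1 / M (Fin.last N)) • projℝ j) σ := by
  have := (HasFDerivAt.fun_sum (u := Finset.univ) fun k _ => hasFDerivAt_coord_div M k σ).add
    (hasFDerivAt_lastFraction_div M σ)
  exact HasFDerivAt.sum_smul_proj_of_apply_single this fun j => by simp [sub_eq_add_neg, neg_div]

def entropyDensity (ρ : EuclideanSpace ℝ (Fin N)) : ℝ :=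
  ∑ i, ρ i / M i.castSucc * log (ρ i / (totalConc M ρ * M i.castSucc))
    + lastFraction ρ / M (Fin.last N) * log (lastFraction ρ / (totalConc M ρ * M (Fin.last N)))

/-- The entropy variable `w_i = ln x_i / M_i − ln x_{N+1} / M_{N+1}`, expanded with
`ln x_k = ln (ρ_k / M_k) − ln c`. -/
def entropyVar (i : Fin N) (ρ : EuclideanSpace ℝ (Fin N)) : ℝ :=
  log (ρ i / M i.castSucc) / M i.castSucc
    - log (lastFraction ρ / M (Fin.last N)) / M (Fin.last N)
    - log (totalConc M ρ) * (1 / M i.castSucc - 1 / M (Fin.last N))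

def entropyHessian (ρ : EuclideanSpace ℝ (Fin N)) (i j : Fin N) : ℝ :=
  (if i = j then 1 / (M i.castSucc * ρ i) else 0) + 1 / (M (Fin.last N) * lastFraction ρ)
    - 1 / totalConc M ρ * (1 / M i.castSucc - 1 / M (Fin.last N))
      * (1 / M j.castSucc - 1 / M (Fin.last N))

section OnSimplex

variable {M} (hM : ∀ i, 0 < M i) {ρ : EuclideanSpace ℝ (Fin N)} (hρ : ρ ∈ openSimplex N)
include hM hρ

lemma coord_div_pos (k : Fin N) : 0 < ρ k / M k.castSucc :=
  div_pos (hρ.1 k).1 (hM _)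

lemma lastFraction_div_pos : 0 < lastFraction ρ / M (Fin.last N) :=
  div_pos (lastFraction_pos hρ) (hM _)

lemma totalConc_pos : 0 < totalConc M ρ :=
  add_pos_of_nonneg_of_pos (Finset.sum_nonneg fun k _ => (coord_div_pos hM hρ k).le)
    (lastFraction_div_pos hM hρ)

lemma entropyDensity_eq_sum_mul_log_sub :
    entropyDensity M ρ = ∑ k, ρ k / M k.castSucc * log (ρ k / M k.castSucc)
      + lastFraction ρ / M (Fin.last N) * log (lastFraction ρ / M (Fin.last N))
      - totalConc M ρ * log (totalConc M ρ) := by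
  have hc := (totalConc_pos hM hρ).ne'
  simp only [entropyDensity, div_mul_eq_div_div_swap,
    log_div (coord_div_pos hM hρ _).ne' hc, log_div (lastFraction_div_pos hM hρ).ne' hc,
    mul_sub, Finset.sum_sub_distrib, ← Finset.sum_mul]
  simp only [totalConc]
  ring

lemma hasFDerivAt_entropyDensity :
    HasFDerivAt (entropyDensity M) (∑ i, entropyVar M i ρ • projℝ i) ρ := by
  have hsplit := ((HasFDerivAt.fun_sum (u := Finset.univ) fun k _ =>
      (hasFDerivAt_coord_div M k ρ).mul_log (coord_div_pos hM hρ k).ne').add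
    ((hasFDerivAt_lastFraction_div M ρ).mul_log (lastFraction_div_pos hM hρ).ne')).sub
    ((hasFDerivAt_totalConc M ρ).mul_log (totalConc_pos hM hρ).ne')
  have heq : entropyDensity M =ᶠ[nhds ρ] _ :=
    Filter.eventually_of_mem (isOpen_openSimplex.mem_nhds hρ) fun σ hσ =>
      entropyDensity_eq_sum_mul_log_sub hM hσ
  refine HasFDerivAt.sum_smul_proj_of_apply_single (hsplit.congr_of_eventuallyEq heq) fun j => ?_
  simp only [one_div, ite_smul, zero_smul, Finset.sum_ite_eq, Finset.mem_univ, if_true,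
    sub_apply, add_apply, sum_apply, smul_apply, PiLp.proj_apply, PiLp.single_apply, smul_eq_mul,
    mul_ite, mul_one, mul_zero, Finset.sum_ite_eq', entropyVar]
  ring

lemma hasFDerivAt_entropyVar (i : Fin N) :
    HasFDerivAt (entropyVar M i) (∑ j, entropyHessian M ρ i j • projℝ j) ρ := by
  have hvar := ((((hasFDerivAt_coord_div M i ρ).log (coord_div_pos hM hρ i).ne').mul_const
      (M i.castSucc)⁻¹).sub (((hasFDerivAt_lastFraction_div M ρ).log
      (lastFraction_div_pos hM hρ).ne').mul_const (M (Fin.last N))⁻¹)).sub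
    (((hasFDerivAt_totalConc M ρ).log (totalConc_pos hM hρ).ne').mul_const
      (1 / M i.castSucc - 1 / M (Fin.last N)))
  refine HasFDerivAt.sum_smul_proj_of_apply_single (hvar.congr_of_eventuallyEq
    (.of_forall fun σ => by simp [entropyVar, div_eq_mul_inv])) fun j => ?_
  have hMi := (hM i.castSucc).ne'
  have hMl := (hM (Fin.last N)).ne'
  have hρi := (hρ.1 i).1.ne'
  have hl := (lastFraction_pos hρ).ne'
  simp only [sub_apply, smul_apply, sum_smul_proj_apply_single, smul_eq_mul, entropyHessian]
  split_ifs <;> field_simp <;> ring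

end OnSimplex

end Multicomponent

end

open Multicomponent in
theorem stmt4_general (N : ℕ) (M : Fin (N + 1) → ℝ) (hM : ∀ i, 0 < M i) :
    let S : Set (EuclideanSpace ℝ (Fin N)) :=
      {ρ | (∀ i, 0 < ρ i ∧ ρ i < 1) ∧ ∑ i, ρ i < 1}
    let c : EuclideanSpace ℝ (Fin N) → ℝ := fun ρ =>
      (∑ i, ρ i / M i.castSucc) + (1 - ∑ i, ρ i) / M (Fin.last N)
    let x : EuclideanSpace ℝ (Fin N) → Fin N → ℝ := fun ρ i => ρ i / (c ρ * M i.castSucc)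
    let xlast : EuclideanSpace ℝ (Fin N) → ℝ := fun ρ =>
      (1 - ∑ i, ρ i) / (c ρ * M (Fin.last N))
    let h : EuclideanSpace ℝ (Fin N) → ℝ := fun ρ =>
      (∑ i, (ρ i / M i.castSucc) * Real.log (x ρ i))
        + ((1 - ∑ i, ρ i) / M (Fin.last N)) * Real.log (xlast ρ)
    ∀ ρ ∈ S, DifferentiableAt ℝ h ρ ∧
      ∀ i : Fin N,
        DifferentiableAt ℝ (fun σ => fderiv ℝ h σ (EuclideanSpace.single i 1)) ρ ∧
        ∀ j : Fin N,
          fderiv ℝ (fun σ => fderiv ℝ h σ (EuclideanSpace.single i 1)) ρ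
              (EuclideanSpace.single j 1)
            = (if i = j then 1 / (M i.castSucc * ρ i) else 0)
              + 1 / (M (Fin.last N) * (1 - ∑ k, ρ k))
              - (1 / c ρ) * (1 / M i.castSucc - 1 / M (Fin.last N))
                * (1 / M j.castSucc - 1 / M (Fin.last N)) := by
  intro S c x xlast h ρ hρ
  have hw (i : Fin N) : (fun σ => fderiv ℝ h σ (EuclideanSpace.single i 1)) =ᶠ[nhds ρ]
      entropyVar M i :=
    Filter.eventually_of_mem (isOpen_openSimplex.mem_nhds hρ) fun σ hσ => by
      show fderiv ℝ (entropyDensity M) σ (single i 1) = _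
      rw [(hasFDerivAt_entropyDensity hM hσ).fderiv, sum_smul_proj_apply_single]
  refine ⟨(hasFDerivAt_entropyDensity hM hρ).differentiableAt, fun i =>
    ⟨((hasFDerivAt_entropyVar hM hρ i).congr_of_eventuallyEq (hw i)).differentiableAt,
      fun j => ?_⟩⟩
  rw [(hw i).fderiv_eq, (hasFDerivAt_entropyVar hM hρ i).fderiv, sum_smul_proj_apply_single]
  rfl

/-- The entropy density `h` is twice differentiable on the open simplex and its Hessian
is given by
`∂²h/∂ρ_i∂ρ_j = δ_{ij}/(M_i ρ_i) + 1/(M_{N+1} ρ_{N+1})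
  − (1/c)(1/M_i − 1/M_{N+1})(1/M_j − 1/M_{N+1})`. -/
theorem stmt4 (N : ℕ) (hN : 1 ≤ N) (M : Fin (N + 1) → ℝ) (hM : ∀ i, 0 < M i) :
    let S : Set (EuclideanSpace ℝ (Fin N)) :=
      {ρ | (∀ i, 0 < ρ i ∧ ρ i < 1) ∧ ∑ i, ρ i < 1}
    let c : EuclideanSpace ℝ (Fin N) → ℝ := fun ρ =>
      (∑ i, ρ i / M i.castSucc) + (1 - ∑ i, ρ i) / M (Fin.last N)
    let x : EuclideanSpace ℝ (Fin N) → Fin N → ℝ := fun ρ i => ρ i / (c ρ * M i.castSucc)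
    let xlast : EuclideanSpace ℝ (Fin N) → ℝ := fun ρ =>
      (1 - ∑ i, ρ i) / (c ρ * M (Fin.last N))
    let h : EuclideanSpace ℝ (Fin N) → ℝ := fun ρ =>
      (∑ i, (ρ i / M i.castSucc) * Real.log (x ρ i))
        + ((1 - ∑ i, ρ i) / M (Fin.last N)) * Real.log (xlast ρ)
    ∀ ρ ∈ S, DifferentiableAt ℝ h ρ ∧
      ∀ i : Fin N,
        DifferentiableAt ℝ (fun σ => fderiv ℝ h σ (EuclideanSpace.single i 1)) ρ ∧
        ∀ j : Fin N,
          fderiv ℝ (fun σ => fderiv ℝ h σ (EuclideanSpace.single i 1)) ρ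
              (EuclideanSpace.single j 1)
            = (if i = j then 1 / (M i.castSucc * ρ i) else 0)
              + 1 / (M (Fin.last N) * (1 - ∑ k, ρ k))
              - (1 / c ρ) * (1 / M i.castSucc - 1 / M (Fin.last N))
                * (1 / M j.castSucc - 1 / M (Fin.last N)) :=
  stmt4_general N M hM
end

section
/- Fix N ≥ 1 and molar masses M_1,…,M_{N+1} > 0. For every ρ' = (ρ_1,…,ρ_N) with ρ_i > 0 for all i and Σ_{i=1}^N ρ_i < 1, the N×N matrix H(ρ') with entries H_{ij} = δ_{ij}/(M_i ρ_i) + 1/(M_{N+1} ρ_{N+1}) − (1/c)·(1/M_i − 1/M_{N+1})·(1/M_j − 1/M_{N+1}) is symmetric and positive definite. -/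
/-!
Extend `x` by `x_{N+1} = -∑ x_i`. Then `xᵀ H x = ∑_k x_k² / (M_k ρ_k) - (∑_k x_k / M_k)² / c`
with `c = ∑_k ρ_k / M_k`, sums over all `N + 1` species. This is positive by the strict form of
Sedrakyan's inequality with weights `ρ_k / M_k`: equality would force `x_k = m ρ_k` for every `k`,
and summing over `k` gives `m = 0`.
-/

open Finset Matrix

section Sedrakyan

variable {ι R : Type*} [Field R] [LinearOrder R] [IsStrictOrderedRing R]

theorem sum_sq_div_sub_sq_sum_div_sum (s : Finset ι) (f : ι → R) {g : ι → R}
    (hg : ∀ i ∈ s, 0 < g i) :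
    ∑ i ∈ s, f i ^ 2 / g i - (∑ i ∈ s, f i) ^ 2 / ∑ i ∈ s, g i
      = ∑ i ∈ s, g i * (f i / g i - (∑ j ∈ s, f j) / ∑ j ∈ s, g j) ^ 2 := by
  set m := (∑ j ∈ s, f j) / ∑ j ∈ s, g j
  have hterm : ∀ i ∈ s, g i * (f i / g i - m) ^ 2 = f i ^ 2 / g i - 2 * m * f i + m ^ 2 * g i := by
    intro i hi
    field_simp [(hg i hi).ne']
    ring
  rw [sum_congr rfl hterm, sum_add_distrib, sum_sub_distrib, ← mul_sum, ← mul_sum]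
  rcases (sum_nonneg fun i hi => (hg i hi).le).eq_or_lt' with hG | hG
  · simp [m, hG]
  · simp only [m]
    field_simp
    ring

theorem sq_sum_div_lt_sum_sq_div (s : Finset ι) (f : ι → R) {g : ι → R}
    (hg : ∀ i ∈ s, 0 < g i) (hfg : ¬ ∃ m, ∀ i ∈ s, f i = m * g i) :
    (∑ i ∈ s, f i) ^ 2 / ∑ i ∈ s, g i < ∑ i ∈ s, f i ^ 2 / g i := by
  rw [← sub_pos, sum_sq_div_sub_sq_sum_div_sum s f hg]
  refine (sum_nonneg fun i hi => mul_nonneg (hg i hi).le (sq_nonneg _)).lt_of_ne fun h => hfg ?_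
  refine ⟨(∑ j ∈ s, f j) / ∑ j ∈ s, g j, fun i hi => ?_⟩
  have hi0 := (sum_eq_zero_iff_of_nonneg fun i hi => mul_nonneg (hg i hi).le (sq_nonneg _)).1
    h.symm i hi
  rw [mul_eq_zero, or_iff_right (hg i hi).ne', sq_eq_zero_iff, sub_eq_zero,
    div_eq_iff (hg i hi).ne'] at hi0
  exact hi0

theorem sq_sum_div_lt_sum_sq_div_of_sum_eq_zero [Fintype ι] {M r X : ι → R}
    (hM : ∀ i, 0 < M i) (hr : ∀ i, 0 < r i) (hX : ∑ i, X i = 0) (hX0 : X ≠ 0) :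
    (∑ i, X i / M i) ^ 2 / ∑ i, r i / M i < ∑ i, X i ^ 2 / (M i * r i) := by
  refine (sq_sum_div_lt_sum_sq_div univ (fun i => X i / M i) (g := fun i => r i / M i)
    (fun i _ => div_pos (hr i) (hM i)) ?_).trans_eq (sum_congr rfl fun i _ => ?_)
  · rintro ⟨m, hm⟩
    have hXm : X = m • r := funext fun i => by
      have := hm i (mem_univ i)
      field_simp [(hM i).ne'] at this
      simpa using this
    have : Nonempty ι := not_isEmpty_iff.1 fun _ => hX0 (Subsingleton.elim _ _)
    have hm0 : m = 0 := by
      simpa [hXm, ← mul_sum, (sum_pos (fun i _ => hr i) univ_nonempty).ne'] using hX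
    exact hX0 (by simp [hXm, hm0])
  · field_simp [(hM i).ne', (hr i).ne']

end Sedrakyan

section QuadraticForm

variable {n R : Type*} [Fintype n] [CommRing R]

theorem dotProduct_diagonal_mulVec [DecidableEq n] (d x : n → R) :
    x ⬝ᵥ (diagonal d *ᵥ x) = ∑ i, d i * x i ^ 2 := by
  simp only [dotProduct, mulVec_diagonal]
  exact sum_congr rfl fun i _ => by ring

theorem dotProduct_vecMulVec_self_mulVec (u x : n → R) :
    x ⬝ᵥ (vecMulVec u u *ᵥ x) = (u ⬝ᵥ x) ^ 2 := by
  rw [vecMulVec_mulVec, sq]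
  simp [dotProduct_comm x u]

end QuadraticForm

theorem Matrix.isSymm_vecMulVec_self {n R : Type*} [CommMagma R] (u : n → R) :
    (vecMulVec u u).IsSymm :=
  transpose_vecMulVec u u

theorem stmt5_general (N : ℕ) (M : Fin (N + 1) → ℝ) (hM : ∀ i, 0 < M i)
    (ρ : Fin N → ℝ) (hρpos : ∀ i, 0 < ρ i) (hρsum : ∑ i, ρ i < 1) :
    let ρlast : ℝ := 1 - ∑ i, ρ i
    let c : ℝ := (∑ i, ρ i / M i.castSucc) + ρlast / M (Fin.last N)
    let H : Matrix (Fin N) (Fin N) ℝ := Matrix.of fun i j =>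
      (if i = j then 1 / (M i.castSucc * ρ i) else 0)
        + 1 / (M (Fin.last N) * ρlast)
        - (1 / c) * (1 / M i.castSucc - 1 / M (Fin.last N))
          * (1 / M j.castSucc - 1 / M (Fin.last N))
    H.IsSymm ∧ H.PosDef := by
  intro ρlast c H
  set v : Fin N → ℝ := fun i => 1 / M i.castSucc - 1 / M (Fin.last N)
  have hH : H = diagonal (fun i => 1 / (M i.castSucc * ρ i))
      + (1 / (M (Fin.last N) * ρlast)) • vecMulVec 1 1 - c⁻¹ • vecMulVec v v := by
    ext i j
    simp [H, v, diagonal_apply, vecMulVec_apply, mul_assoc]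
  have hsymm : H.IsSymm := hH ▸
    ((isSymm_diagonal _).add ((isSymm_vecMulVec_self 1).smul _)).sub
      ((isSymm_vecMulVec_self v).smul _)
  refine ⟨hsymm, .of_dotProduct_mulVec_pos (isHermitian_iff_isSymm.2 hsymm) fun x hx => ?_⟩
  set X : Fin (N + 1) → ℝ := Fin.snoc x (-∑ i, x i)
  have hρlast : 0 < ρlast := sub_pos.2 hρsum
  have key := sq_sum_div_lt_sum_sq_div_of_sum_eq_zero (r := Fin.snoc ρ ρlast) (X := X) hM
    (Fin.lastCases (by simpa using hρlast) (by simpa using hρpos))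
    (by simp [X, Fin.sum_univ_castSucc])
    (fun h => hx (funext fun i => by simpa [X] using congr_fun h i.castSucc))
  have hvx : v ⬝ᵥ x = ∑ i, x i / M i.castSucc + (-∑ i, x i) / M (Fin.last N) := by
    simp only [v, dotProduct, sub_mul, sum_sub_distrib, neg_div, ← sub_eq_add_neg,
      div_mul_eq_mul_div, one_mul, ← sum_div]
  simp only [Fin.sum_univ_castSucc, X, Fin.snoc_castSucc, Fin.snoc_last, ← hvx, neg_sq] at key
  rw [star_trivial, hH, sub_mulVec, add_mulVec, smul_mulVec, smul_mulVec, dotProduct_sub,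
    dotProduct_add, dotProduct_smul, dotProduct_smul, dotProduct_diagonal_mulVec,
    dotProduct_vecMulVec_self_mulVec, dotProduct_vecMulVec_self_mulVec, one_dotProduct,
    smul_eq_mul, smul_eq_mul, inv_mul_eq_div, ← one_div_mul_eq_div, sub_pos]
  simpa only [one_div_mul_eq_div] using key

/-- The Hessian matrix `H(ρ')` of the entropy density is symmetric and positive
definite on the open simplex. -/
theorem stmt5 (N : ℕ) (hN : 1 ≤ N) (M : Fin (N + 1) → ℝ) (hM : ∀ i, 0 < M i)
    (ρ : Fin N → ℝ) (hρpos : ∀ i, 0 < ρ i) (hρsum : ∑ i, ρ i < 1) :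
    let ρlast : ℝ := 1 - ∑ i, ρ i
    let c : ℝ := (∑ i, ρ i / M i.castSucc) + ρlast / M (Fin.last N)
    let H : Matrix (Fin N) (Fin N) ℝ := Matrix.of fun i j =>
      (if i = j then 1 / (M i.castSucc * ρ i) else 0)
        + 1 / (M (Fin.last N) * ρlast)
        - (1 / c) * (1 / M i.castSucc - 1 / M (Fin.last N))
          * (1 / M j.castSucc - 1 / M (Fin.last N))
    H.IsSymm ∧ H.PosDef :=
  stmt5_general N M hM ρ hρpos hρsum
end

section
/- Fix N ≥ 1 and molar masses M_1,…,M_{N+1} > 0. The entropy density h is convex on the open simplex S in the sense that for all ρ', σ' ∈ S one has h(ρ') − h(σ') ≤ Σ_{i=1}^N w_i(ρ')·(ρ_i − σ_i), where w_i(ρ') = (ln x_i(ρ'))/M_i − (ln x_{N+1}(ρ'))/M_{N+1} are the entropy variables evaluated at ρ'. -/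
/-!
With `a_j = ρ_j / M_j` for `j ≤ N + 1` (where `ρ_{N+1} = 1 - ∑ ρ_i`) and `A = ∑ a_j = c(ρ')`, the
entropy is `h = ∑ a_j log (a_j / A)`, and since `ρ_{N+1} - σ_{N+1} = -∑ (ρ_i - σ_i)` the right-hand
side is `∑_j (a_j - b_j) log (a_j / A)`. The inequality thus reduces to Gibbs' inequality
`∑ b_j log (a_j / A) ≤ ∑ b_j log (b_j / B)`, which follows termwise from `log t ≤ t - 1`.
-/

open Finset Real

theorem mul_log_div_sub_mul_log_div_le {a b A B : ℝ} (ha : 0 < a) (hb : 0 < b) (hA : 0 < A)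
    (hB : 0 < B) : b * log (a / A) - b * log (b / B) ≤ B / A * a - b := by
  have hq : 0 < a / A / (b / B) := by positivity
  calc b * log (a / A) - b * log (b / B) = b * log (a / A / (b / B)) := by
        rw [log_div (x := a / A) (y := b / B) (by positivity) (by positivity), mul_sub]
    _ ≤ b * (a / A / (b / B) - 1) := by gcongr; exact log_le_sub_one_of_pos hq
    _ = B / A * a - b := by field_simp

theorem gibbs_inequality {ι : Type*} [Fintype ι] {a b : ι → ℝ} (ha : ∀ i, 0 < a i)
    (hb : ∀ i, 0 < b i) :
    ∑ i, b i * log (a i / ∑ j, a j) ≤ ∑ i, b i * log (b i / ∑ j, b j) := by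
  rcases isEmpty_or_nonempty ι with hι | hι
  · simp
  have hA : 0 < ∑ j, a j := sum_pos (fun j _ => ha j) univ_nonempty
  have hB : 0 < ∑ j, b j := sum_pos (fun j _ => hb j) univ_nonempty
  have hsum : ∑ i, ((∑ j, b j) / (∑ j, a j) * a i - b i) = 0 := by
    rw [sum_sub_distrib, ← mul_sum, div_mul_cancel₀ _ hA.ne', sub_self]
  have := sum_le_sum fun i (_ : i ∈ univ) =>
    mul_log_div_sub_mul_log_div_le (ha i) (hb i) hA hB
  rw [sum_sub_distrib, hsum] at this
  linarith

noncomputable def mixingEntropy {ι : Type*} [Fintype ι] (a : ι → ℝ) : ℝ :=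
  ∑ i, a i * log (a i / ∑ j, a j)

theorem mixingEntropy_sub_le {ι : Type*} [Fintype ι] {a b : ι → ℝ} (ha : ∀ i, 0 < a i)
    (hb : ∀ i, 0 < b i) :
    mixingEntropy a - mixingEntropy b ≤ ∑ i, (a i - b i) * log (a i / ∑ j, a j) := by
  have := gibbs_inequality ha hb
  simp only [mixingEntropy, sub_mul, sum_sub_distrib]
  linarith

section Simplex

variable {N : ℕ} (M : Fin (N + 1) → ℝ)

noncomputable def concentrations (ρ : Fin N → ℝ) : Fin (N + 1) → ℝ :=
  fun j => (Fin.snoc ρ (1 - ∑ i, ρ i) : Fin (N + 1) → ℝ) j / M j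

@[simp] theorem concentrations_castSucc (ρ : Fin N → ℝ) (i : Fin N) :
    concentrations M ρ i.castSucc = ρ i / M i.castSucc := by
  simp [concentrations]

@[simp] theorem concentrations_last (ρ : Fin N → ℝ) :
    concentrations M ρ (Fin.last N) = (1 - ∑ i, ρ i) / M (Fin.last N) := by
  simp [concentrations]

theorem sum_concentrations (ρ : Fin N → ℝ) :
    ∑ j, concentrations M ρ j =
      (∑ i, ρ i / M i.castSucc) + (1 - ∑ i, ρ i) / M (Fin.last N) := by
  simp [Fin.sum_univ_castSucc]

theorem concentrations_pos {M} (hM : ∀ j, 0 < M j) {ρ : Fin N → ℝ} (hρ : ∀ i, 0 < ρ i)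
    (hρ1 : ∑ i, ρ i < 1) (j : Fin (N + 1)) : 0 < concentrations M ρ j := by
  induction j using Fin.lastCases with
  | last => simpa using div_pos (sub_pos.mpr hρ1) (hM _)
  | cast i => simpa using div_pos (hρ i) (hM _)

theorem mixingEntropy_concentrations (ρ : Fin N → ℝ) :
    mixingEntropy (concentrations M ρ) =
      (∑ i, ρ i / M i.castSucc * log (ρ i / ((∑ j, concentrations M ρ j) * M i.castSucc)))
        + (1 - ∑ i, ρ i) / M (Fin.last N) *
          log ((1 - ∑ i, ρ i) / ((∑ j, concentrations M ρ j) * M (Fin.last N))) := by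
  rw [mixingEntropy, Fin.sum_univ_castSucc]
  simp only [concentrations_castSucc, concentrations_last, div_div, mul_comm (M _)]

/-- With `L j = log x_j` the left-hand side is `∑ w_i (ρ_i - σ_i)`. -/
theorem sum_entropyVariables_mul_sub (ρ σ : Fin N → ℝ) (L : Fin (N + 1) → ℝ) :
    ∑ i, (L i.castSucc / M i.castSucc - L (Fin.last N) / M (Fin.last N)) * (ρ i - σ i) =
      ∑ j, (concentrations M ρ j - concentrations M σ j) * L j := by
  have hterm : ∀ i : Fin N,
      (L i.castSucc / M i.castSucc - L (Fin.last N) / M (Fin.last N)) * (ρ i - σ i) =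
        (ρ i / M i.castSucc - σ i / M i.castSucc) * L i.castSucc -
          L (Fin.last N) / M (Fin.last N) * (ρ i - σ i) :=
    fun i => by ring
  simp only [hterm, sum_sub_distrib, ← mul_sum, Fin.sum_univ_castSucc, concentrations_castSucc,
    concentrations_last]
  ring

end Simplex

theorem stmt6_general (N : ℕ) (M : Fin (N + 1) → ℝ) (hM : ∀ i, 0 < M i) :
    let S : Set (Fin N → ℝ) := {ρ | (∀ i, 0 < ρ i ∧ ρ i < 1) ∧ ∑ i, ρ i < 1}
    let c : (Fin N → ℝ) → ℝ := fun ρ =>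
      (∑ i, ρ i / M i.castSucc) + (1 - ∑ i, ρ i) / M (Fin.last N)
    let x : (Fin N → ℝ) → Fin N → ℝ := fun ρ i => ρ i / (c ρ * M i.castSucc)
    let xlast : (Fin N → ℝ) → ℝ := fun ρ => (1 - ∑ i, ρ i) / (c ρ * M (Fin.last N))
    let h : (Fin N → ℝ) → ℝ := fun ρ =>
      (∑ i, (ρ i / M i.castSucc) * Real.log (x ρ i))
        + ((1 - ∑ i, ρ i) / M (Fin.last N)) * Real.log (xlast ρ)
    let w : (Fin N → ℝ) → Fin N → ℝ := fun ρ i =>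
      Real.log (x ρ i) / M i.castSucc - Real.log (xlast ρ) / M (Fin.last N)
    ∀ ρ ∈ S, ∀ σ ∈ S, h ρ - h σ ≤ ∑ i, w ρ i * (ρ i - σ i) := by
  intro S c x xlast h w ρ hρ σ hσ
  have hc : ∀ τ, c τ = ∑ j, concentrations M τ j := fun τ => (sum_concentrations M τ).symm
  have hh : ∀ τ, h τ = mixingEntropy (concentrations M τ) := fun τ => by
    simp only [h, x, xlast, hc, mixingEntropy_concentrations]
  have hw : ∑ i, w ρ i * (ρ i - σ i) =
      ∑ j, (concentrations M ρ j - concentrations M σ j) *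
        log (concentrations M ρ j / ∑ k, concentrations M ρ k) := by
    rw [← sum_entropyVariables_mul_sub]
    simp only [w, x, xlast, hc, Fin.sum_univ_castSucc, concentrations_castSucc,
      concentrations_last, div_div, mul_comm (M _)]
  rw [hh, hh, hw]
  exact mixingEntropy_sub_le (concentrations_pos hM (fun i => (hρ.1 i).1) hρ.2)
    (concentrations_pos hM (fun i => (hσ.1 i).1) hσ.2)

/-- Convexity inequality for the entropy density: for all `ρ', σ'` in the open simplex,
`h(ρ') − h(σ') ≤ Σ_i w_i(ρ')(ρ_i − σ_i)`. -/
theorem stmt6 (N : ℕ) (hN : 1 ≤ N) (M : Fin (N + 1) → ℝ) (hM : ∀ i, 0 < M i) :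
    let S : Set (Fin N → ℝ) := {ρ | (∀ i, 0 < ρ i ∧ ρ i < 1) ∧ ∑ i, ρ i < 1}
    let c : (Fin N → ℝ) → ℝ := fun ρ =>
      (∑ i, ρ i / M i.castSucc) + (1 - ∑ i, ρ i) / M (Fin.last N)
    let x : (Fin N → ℝ) → Fin N → ℝ := fun ρ i => ρ i / (c ρ * M i.castSucc)
    let xlast : (Fin N → ℝ) → ℝ := fun ρ => (1 - ∑ i, ρ i) / (c ρ * M (Fin.last N))
    let h : (Fin N → ℝ) → ℝ := fun ρ =>
      (∑ i, (ρ i / M i.castSucc) * Real.log (x ρ i))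
        + ((1 - ∑ i, ρ i) / M (Fin.last N)) * Real.log (xlast ρ)
    let w : (Fin N → ℝ) → Fin N → ℝ := fun ρ i =>
      Real.log (x ρ i) / M i.castSucc - Real.log (xlast ρ) / M (Fin.last N)
    ∀ ρ ∈ S, ∀ σ ∈ S, h ρ - h σ ≤ ∑ i, w ρ i * (ρ i - σ i) :=
  stmt6_general N M hM
end

section
/- Fix N ≥ 1, molar masses M_1,…,M_{N+1} > 0, and symmetric diffusion coefficients D_{ij} = D_{ji} > 0 for i ≠ j. For every ρ = (ρ_1,…,ρ_{N+1}) with ρ_i ≥ 0 and Σ_{i=1}^{N+1} ρ_i = 1, the N×N matrix A_0(ρ') defined by A^0_{ij} = −(d_{ij} − d_{i,N+1})ρ_i for i ≠ j and A^0_{ii} = Σ_{k=1,k≠i}^{N} (d_{ik} − d_{i,N+1})ρ_k + d_{i,N+1}, where d_{ij} = 1/(c² M_i M_j D_{ij}) and c = Σ_{k=1}^{N+1} ρ_k/M_k, is invertible, and there exists a constant C > 0 depending only on the M_i and D_{ij} such that every entry of A_0(ρ')^{-1} has absolute value at most C, uniformly in such ρ. -/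
/-!
For `J : Fin (N + 1) → ℝ` put `(operator d ρ J)ᵢ = ∑ₖ dᵢₖ (ρₖ Jᵢ - ρᵢ Jₖ)`. Eliminating the last
flux through `∑ J = 0` turns the first `N` entries into `A₀(ρ') v` for `J = (v, -∑ v)`, using
`∑ ρ = 1`. Since `d` is symmetric, the entries of `operator d ρ J` sum to zero, so `A₀(ρ') v = 0`
makes the whole operator vanish. At an index maximising `Jₖ / ρₖ` over `ρₖ > 0` every summand has
the same sign, which forces `J` to be a multiple of `ρ` (entries with `ρₖ = 0` vanish directly), and
`∑ J = 0`, `∑ ρ = 1` make it zero. So `A₀(ρ')` is invertible on the whole simplex; it depends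
continuously on `ρ` there (as `c > 0`), and compactness of the simplex bounds its inverse.
-/

open scoped Matrix

theorem exists_forall_abs_inv_apply_le {X n : Type*} [TopologicalSpace X] [Fintype n]
    [DecidableEq n] {F : X → Matrix n n ℝ} {K : Set X} (hK : IsCompact K) (hF : ContinuousOn F K)
    (hdet : ∀ x ∈ K, (F x).det ≠ 0) : ∃ C > 0, ∀ x ∈ K, ∀ i j, |(F x)⁻¹ i j| ≤ C := by
  have hinv : ContinuousOn (fun x => (F x)⁻¹) K := fun x hx =>
    (continuousAt_matrix_inv _ (by rw [Ring.inverse_eq_inv']; exact continuousAt_inv₀ (hdet x hx))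
      ).comp_continuousWithinAt (hF x hx)
  obtain ⟨C, hC⟩ := hK.exists_bound_of_continuousOn (f := fun x i j => (F x)⁻¹ i j) hinv
  refine ⟨max C 1, by positivity, fun x hx i j => ?_⟩
  calc |(F x)⁻¹ i j| ≤ ‖fun i j => (F x)⁻¹ i j‖ :=
        (norm_le_pi_norm _ j).trans (norm_le_pi_norm (fun i j => (F x)⁻¹ i j) i)
    _ ≤ max C 1 := (hC x hx).trans (le_max_left C 1)

theorem exists_pos_of_sum_eq_one {ι : Type*} [Fintype ι] {ρ : ι → ℝ} (h : ∑ i, ρ i = 1) :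
    ∃ i, 0 < ρ i := by
  obtain ⟨m, -, hm⟩ := Finset.exists_lt_of_sum_lt (show ∑ i, (0 : ℝ) < ∑ i, ρ i by simp [h])
  exact ⟨m, hm⟩

namespace MaxwellStefan

variable {ι : Type*} [Fintype ι]

def operator (d : ι → ι → ℝ) (ρ J : ι → ℝ) (i : ι) : ℝ :=
  ∑ k, d i k * (ρ k * J i - ρ i * J k)

theorem sum_operator_eq_zero {d : ι → ι → ℝ} (hd : ∀ i j, d i j = d j i) (ρ J : ι → ℝ) :
    ∑ i, operator d ρ J i = 0 := by
  have hanti : ∑ i, operator d ρ J i = -∑ i, operator d ρ J i := by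
    unfold operator
    rw [← Finset.sum_neg_distrib]
    refine Finset.sum_comm.trans (Finset.sum_congr rfl fun k _ => ?_)
    rw [← Finset.sum_neg_distrib]
    exact Finset.sum_congr rfl fun i _ => by rw [hd]; ring
  linarith

section Kernel

variable {d : ι → ι → ℝ} (hd : ∀ i j, i ≠ j → 0 < d i j) {ρ J : ι → ℝ} (hρ : ∀ i, 0 ≤ ρ i)
  {m : ι} (hm : 0 < ρ m)
include hd hρ hm

theorem eq_zero_of_operator_eq_zero_of_eq_zero {i : ι} (hJ : operator d ρ J i = 0) (hi : ρ i = 0) :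
    J i = 0 := by
  have hJ' : J i * ∑ k, d i k * ρ k = 0 := by
    rw [← hJ, operator, Finset.mul_sum]
    exact Finset.sum_congr rfl fun k _ => by rw [hi]; ring
  have hmi : m ≠ i := fun h => by rw [h, hi] at hm; exact lt_irrefl 0 hm
  have hpos : 0 < ∑ k, d i k * ρ k := by
    refine Finset.sum_pos' (fun k _ => ?_) ⟨m, Finset.mem_univ m, mul_pos (hd i m hmi.symm) hm⟩
    rcases eq_or_ne i k with rfl | hik
    · rw [hi, mul_zero]
    · exact mul_nonneg (hd i k hik).le (hρ k)
  exact (mul_eq_zero.1 hJ').resolve_right hpos.ne'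

theorem exists_eq_smul_of_operator_eq_zero (hJ : operator d ρ J = 0) :
    ∃ c : ℝ, J = c • ρ := by
  classical
  obtain ⟨n, hn, hmax⟩ := (Finset.univ.filter (0 < ρ ·)).exists_max_image (fun i => J i / ρ i)
    ⟨m, Finset.mem_filter.2 ⟨Finset.mem_univ m, hm⟩⟩
  have hρn : 0 < ρ n := (Finset.mem_filter.1 hn).2
  set c := J n / ρ n
  have hJn : J n = c * ρ n := (div_mul_cancel₀ _ hρn.ne').symm
  have hle : ∀ k, J k ≤ c * ρ k := by
    intro k
    rcases (hρ k).eq_or_lt with h0 | hpos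
    · rw [eq_zero_of_operator_eq_zero_of_eq_zero hd hρ hm (congrFun hJ k) h0.symm, ← h0, mul_zero]
    · exact (div_le_iff₀ hpos).1 (hmax k (Finset.mem_filter.2 ⟨Finset.mem_univ k, hpos⟩))
  have hterm_nonneg : ∀ k ∈ Finset.univ, 0 ≤ d n k * ρ n * (c * ρ k - J k) := by
    intro k _
    rcases eq_or_ne n k with rfl | hnk
    · rw [hJn, sub_self, mul_zero]
    · exact mul_nonneg (mul_pos (hd n k hnk) hρn).le (sub_nonneg.2 (hle k))
  have hsum : ∑ k, d n k * ρ n * (c * ρ k - J k) = 0 := by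
    rw [← show operator d ρ J n = 0 from congrFun hJ n]
    exact Finset.sum_congr rfl fun k _ => by rw [hJn]; ring
  refine ⟨c, funext fun k => ?_⟩
  rcases eq_or_ne n k with rfl | hnk
  · exact hJn
  · have h := (Finset.sum_eq_zero_iff_of_nonneg hterm_nonneg).1 hsum k (Finset.mem_univ k)
    rw [mul_eq_zero, sub_eq_zero] at h
    exact (h.resolve_left (mul_pos (hd n k hnk) hρn).ne').symm

end Kernel

section Reduced

variable {N : ℕ}

def reducedMatrix (d : Fin (N + 1) → Fin (N + 1) → ℝ) (ρ : Fin (N + 1) → ℝ) :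
    Matrix (Fin N) (Fin N) ℝ :=
  Matrix.of fun i j =>
    if i = j then
      (∑ k ∈ Finset.univ.erase i,
        (d i.castSucc k.castSucc - d i.castSucc (Fin.last N)) * ρ k.castSucc)
        + d i.castSucc (Fin.last N)
    else -(d i.castSucc j.castSucc - d i.castSucc (Fin.last N)) * ρ i.castSucc

theorem reducedMatrix_mulVec_apply (d : Fin (N + 1) → Fin (N + 1) → ℝ) (ρ : Fin (N + 1) → ℝ)
    (v : Fin N → ℝ) (i : Fin N) :
    (reducedMatrix d ρ *ᵥ v) i =
      ∑ k, (d i.castSucc k.castSucc - d i.castSucc (Fin.last N)) *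
          (ρ k.castSucc * v i - ρ i.castSucc * v k)
        + d i.castSucc (Fin.last N) * v i := by
  set e : Fin N → ℝ := fun k => d i.castSucc k.castSucc - d i.castSucc (Fin.last N)
  have hoff : ∑ j ∈ Finset.univ.erase i, reducedMatrix d ρ i j * v j
      = ∑ j ∈ Finset.univ.erase i, -(e j * ρ i.castSucc * v j) :=
    Finset.sum_congr rfl fun j hj => by
      simp [reducedMatrix, e, (Finset.ne_of_mem_erase hj).symm]; ring
  rw [Matrix.mulVec, dotProduct, ← Finset.add_sum_erase _ _ (Finset.mem_univ i), hoff,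
    ← Finset.add_sum_erase _ _ (Finset.mem_univ i)]
  simp only [reducedMatrix, Matrix.of_apply, if_true, sub_self, mul_zero, zero_add]
  rw [add_mul, Finset.sum_mul, add_right_comm, ← Finset.sum_add_distrib]
  exact congrArg (· + _) (Finset.sum_congr rfl fun k _ => by ring)

theorem reducedMatrix_mulVec {d : Fin (N + 1) → Fin (N + 1) → ℝ} {ρ : Fin (N + 1) → ℝ}
    (hρ : ∑ i, ρ i = 1) (v : Fin N → ℝ) :
    reducedMatrix d ρ *ᵥ v = fun i => operator d ρ (Fin.snoc v (-∑ j, v j)) i.castSucc := by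
  funext i
  have hρ' : ∑ k : Fin N, ρ k.castSucc = 1 - ρ (Fin.last N) := by
    rw [← hρ, Fin.sum_univ_castSucc]; ring
  rw [reducedMatrix_mulVec_apply, operator, Fin.sum_univ_castSucc]
  simp only [Fin.snoc_castSucc, Fin.snoc_last, sub_mul, mul_sub, Finset.sum_sub_distrib]
  simp only [← Finset.mul_sum, ← Finset.sum_mul, hρ']
  ring

theorem reducedMatrix_det_ne_zero {d : Fin (N + 1) → Fin (N + 1) → ℝ}
    (hsymm : ∀ i j, d i j = d j i) (hpos : ∀ i j, i ≠ j → 0 < d i j) {ρ : Fin (N + 1) → ℝ}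
    (hρ : ∀ i, 0 ≤ ρ i) (hsum : ∑ i, ρ i = 1) : (reducedMatrix d ρ).det ≠ 0 := by
  intro hdet
  obtain ⟨v, hv0, hv⟩ := Matrix.exists_mulVec_eq_zero_iff.2 hdet
  set J : Fin (N + 1) → ℝ := Fin.snoc v (-∑ j, v j)
  have hcast : ∀ i : Fin N, operator d ρ J i.castSucc = 0 := fun i =>
    congrFun ((reducedMatrix_mulVec hsum v).symm.trans hv) i
  have hlast : operator d ρ J (Fin.last N) = 0 := by
    have h := sum_operator_eq_zero hsymm ρ J
    rwa [Fin.sum_univ_castSucc, Finset.sum_eq_zero fun i _ => hcast i, zero_add] at h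
  obtain ⟨m, hm⟩ := exists_pos_of_sum_eq_one hsum
  obtain ⟨c, hc⟩ := exists_eq_smul_of_operator_eq_zero hpos hρ hm
    (funext fun i => Fin.lastCases hlast hcast i)
  have hJ : ∑ i, J i = 0 := by simp [J, Fin.sum_univ_castSucc]
  have hc0 : c = 0 := by simpa [hc, ← Finset.mul_sum, hsum] using hJ
  exact hv0 (funext fun i => by simpa [J, hc0] using congrFun hc i.castSucc)

theorem continuousOn_reducedMatrix {X : Type*} [TopologicalSpace X]
    {d : X → Fin (N + 1) → Fin (N + 1) → ℝ} {ρ : X → Fin (N + 1) → ℝ} {s : Set X}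
    (hd : ContinuousOn d s) (hρ : ContinuousOn ρ s) :
    ContinuousOn (fun x => reducedMatrix (d x) (ρ x)) s := by
  refine continuousOn_pi.2 fun i => continuousOn_pi.2 fun j => ?_
  by_cases hij : i = j <;> simp only [reducedMatrix, Matrix.of_apply, hij, if_true, if_false] <;>
    fun_prop

end Reduced

section Coefficients

variable {ι : Type*} [Fintype ι] (M : ι → ℝ) (D : ι → ι → ℝ)

noncomputable def coeff (ρ : ι → ℝ) (i j : ι) : ℝ :=
  1 / ((∑ k, ρ k / M k) ^ 2 * M i * M j * D i j)

variable {M D}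

theorem coeff_symm (hD : ∀ i j, D i j = D j i) (ρ : ι → ℝ) (i j : ι) :
    coeff M D ρ i j = coeff M D ρ j i := by
  rw [coeff, coeff, hD, mul_right_comm _ (M i)]

theorem coeff_pos (hM : ∀ i, 0 < M i) (hD : ∀ i j, i ≠ j → 0 < D i j) {ρ : ι → ℝ}
    (hρ : ∑ k, ρ k / M k ≠ 0) {i j : ι} (hij : i ≠ j) : 0 < coeff M D ρ i j := by
  have := hM i
  have := hM j
  have := hD i j hij
  unfold coeff
  positivity

theorem sum_div_ne_zero_of_mem_stdSimplex (hM : ∀ i, 0 < M i) {ρ : ι → ℝ}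
    (hρ : ρ ∈ stdSimplex ℝ ι) : ∑ k, ρ k / M k ≠ 0 := by
  obtain ⟨m, hm⟩ := exists_pos_of_sum_eq_one hρ.2
  exact (Finset.sum_pos' (fun k _ => div_nonneg (hρ.1 k) (hM k).le)
    ⟨m, Finset.mem_univ m, div_pos hm (hM m)⟩).ne'

variable (M D)

theorem continuousOn_coeff : ContinuousOn (coeff M D) {ρ | ∑ k, ρ k / M k ≠ 0} := by
  refine continuousOn_pi.2 fun i => continuousOn_pi.2 fun j => ?_
  simp only [coeff, one_div, mul_assoc, mul_inv]
  exact ContinuousOn.mul (ContinuousOn.inv₀ (by fun_prop) fun ρ hρ => pow_ne_zero 2 hρ)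
    continuousOn_const

end Coefficients

variable {N : ℕ} {M : Fin (N + 1) → ℝ} (hM : ∀ i, 0 < M i) {D : Fin (N + 1) → Fin (N + 1) → ℝ}
include hM

theorem det_reducedMatrix_coeff_ne_zero (hDpos : ∀ i j, i ≠ j → 0 < D i j)
    (hDsymm : ∀ i j, D i j = D j i) {ρ : Fin (N + 1) → ℝ} (hρ : ρ ∈ stdSimplex ℝ (Fin (N + 1))) :
    (reducedMatrix (coeff M D ρ) ρ).det ≠ 0 :=
  reducedMatrix_det_ne_zero (coeff_symm hDsymm ρ)
    (fun _ _ hij => coeff_pos hM hDpos (sum_div_ne_zero_of_mem_stdSimplex hM hρ) hij) hρ.1 hρ.2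

theorem continuousOn_reducedMatrix_coeff :
    ContinuousOn (fun ρ => reducedMatrix (coeff M D ρ) ρ) (stdSimplex ℝ (Fin (N + 1))) :=
  continuousOn_reducedMatrix
    ((continuousOn_coeff M D).mono fun _ => sum_div_ne_zero_of_mem_stdSimplex hM) continuousOn_id

end MaxwellStefan

theorem stmt7_general (N : ℕ) (M : Fin (N + 1) → ℝ) (hM : ∀ i, 0 < M i)
    (D : Fin (N + 1) → Fin (N + 1) → ℝ) (hDpos : ∀ i j, i ≠ j → 0 < D i j)
    (hDsymm : ∀ i j, D i j = D j i) :
    ∃ C > 0, ∀ ρ : Fin (N + 1) → ℝ, (∀ i, 0 ≤ ρ i) → (∑ i, ρ i) = 1 →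
      let c : ℝ := ∑ k, ρ k / M k
      let d : Fin (N + 1) → Fin (N + 1) → ℝ := fun i j => 1 / (c ^ 2 * M i * M j * D i j)
      let A : Matrix (Fin N) (Fin N) ℝ := Matrix.of fun i j =>
        if i = j then
          (∑ k ∈ Finset.univ.erase i,
            (d i.castSucc k.castSucc - d i.castSucc (Fin.last N)) * ρ k.castSucc)
            + d i.castSucc (Fin.last N)
        else -(d i.castSucc j.castSucc - d i.castSucc (Fin.last N)) * ρ i.castSucc
      IsUnit A.det ∧ ∀ i j, |A⁻¹ i j| ≤ C := by
  have hdet := fun ρ (hρ : ρ ∈ stdSimplex ℝ (Fin (N + 1))) =>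
    MaxwellStefan.det_reducedMatrix_coeff_ne_zero hM hDpos hDsymm hρ
  obtain ⟨C, hC, hbound⟩ := exists_forall_abs_inv_apply_le (isCompact_stdSimplex ℝ _)
    (MaxwellStefan.continuousOn_reducedMatrix_coeff hM) hdet
  exact ⟨C, hC, fun ρ h0 h1 => ⟨(hdet ρ ⟨h0, h1⟩).isUnit, hbound ρ ⟨h0, h1⟩⟩⟩

/-- The reduced Maxwell–Stefan matrix `A_0(ρ')` is invertible, and the entries of its
inverse are bounded uniformly in `ρ` by a constant depending only on the molar masses
and the diffusion coefficients. -/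
theorem stmt7 (N : ℕ) (hN : 1 ≤ N) (M : Fin (N + 1) → ℝ) (hM : ∀ i, 0 < M i)
    (D : Fin (N + 1) → Fin (N + 1) → ℝ) (hDpos : ∀ i j, i ≠ j → 0 < D i j)
    (hDsymm : ∀ i j, D i j = D j i) :
    ∃ C > 0, ∀ ρ : Fin (N + 1) → ℝ, (∀ i, 0 ≤ ρ i) → (∑ i, ρ i) = 1 →
      let c : ℝ := ∑ k, ρ k / M k
      let d : Fin (N + 1) → Fin (N + 1) → ℝ := fun i j => 1 / (c ^ 2 * M i * M j * D i j)
      let A : Matrix (Fin N) (Fin N) ℝ := Matrix.of fun i j =>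
        if i = j then
          (∑ k ∈ Finset.univ.erase i,
            (d i.castSucc k.castSucc - d i.castSucc (Fin.last N)) * ρ k.castSucc)
            + d i.castSucc (Fin.last N)
        else -(d i.castSucc j.castSucc - d i.castSucc (Fin.last N)) * ρ i.castSucc
      IsUnit A.det ∧ ∀ i j, |A⁻¹ i j| ≤ C :=
  stmt7_general N M hM D hDpos hDsymm
end

section
/- Fix N ≥ 1 and molar masses M_1,…,M_{N+1} > 0. The map W : S → ℝ^N defined on the open simplex S = {ρ' ∈ (0,1)^N : Σ_{i=1}^N ρ_i < 1} by W_i(ρ') = (ln x_i)/M_i − (ln x_{N+1})/M_{N+1} is a bijection from S onto ℝ^N; in particular, for every w ∈ ℝ^N there exists a unique ρ' = (ρ_1,…,ρ_N) ∈ (0,1)^N with Σ_{i=1}^N ρ_i < 1 satisfying w = W(ρ'), and the inverse map w ↦ ρ'(w) takes values in the bounded set (0,1)^N. -/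
/-!
Writing `u = log x_{N+1} / M_{N+1}`, the equations `W(ρ') = w` say exactly that
`x_i = exp (M_i (w_i + u))` for `i ≤ N` and `x_{N+1} = exp (M_{N+1} u)`. The constraint
`Σ x_i = 1` is then a single equation in `u` whose left side is continuous and increases strictly
from `0` to `∞`, so it has exactly one solution. Passing from mass fractions `ρ` to molar
fractions `x ∝ ρ_i / M_i` is itself a bijection of the open simplex, inverted by `ρ_i ∝ M_i x_i`.
-/

open Real Finset Filter Topology

noncomputable section

variable {ι : Type*} [Fintype ι]

/-- The last coordinate `1 - Σ ρ_i` is kept implicit. -/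
def openSimplex (ι : Type*) [Fintype ι] : Set (ι → ℝ) := {ρ | (∀ i, 0 < ρ i) ∧ ∑ i, ρ i < 1}

lemma openSimplex_eq_setOf_lt_one :
    openSimplex ι = {ρ | (∀ i, 0 < ρ i ∧ ρ i < 1) ∧ ∑ i, ρ i < 1} := by
  ext ρ
  refine ⟨fun ⟨hpos, hsum⟩ => ⟨fun i => ⟨hpos i, ?_⟩, hsum⟩,
    fun ⟨h, hsum⟩ => ⟨fun i => (h i).1, hsum⟩⟩
  exact (single_le_sum (fun j _ => (hpos j).le) (mem_univ i)).trans_lt hsum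

section Reweight

variable (m : ι → ℝ) (m₀ : ℝ)

/-- For molar masses `m`, `m₀` this is the total concentration `c(ρ')`. -/
def weightedMass (ρ : ι → ℝ) : ℝ := ∑ j, ρ j / m j + (1 - ∑ j, ρ j) / m₀

def reweight (ρ : ι → ℝ) (i : ι) : ℝ := ρ i / m i / weightedMass m m₀ ρ

variable {m m₀} {ρ : ι → ℝ}

lemma weightedMass_pos (hm : ∀ i, 0 < m i) (hm₀ : 0 < m₀) (hρ : ρ ∈ openSimplex ι) :
    0 < weightedMass m m₀ ρ :=
  add_pos_of_nonneg_of_pos (sum_nonneg fun j _ => (div_pos (hρ.1 j) (hm j)).le)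
    (div_pos (sub_pos.2 hρ.2) hm₀)

lemma one_sub_sum_reweight (hd : weightedMass m m₀ ρ ≠ 0) :
    1 - ∑ i, reweight m m₀ ρ i = (1 - ∑ j, ρ j) / m₀ / weightedMass m m₀ ρ := by
  rw [eq_div_iff hd, sub_mul, one_mul]
  simp only [reweight, ← sum_div, div_mul_cancel₀ _ hd]
  unfold weightedMass
  ring

lemma reweight_mapsTo (hm : ∀ i, 0 < m i) (hm₀ : 0 < m₀) :
    Set.MapsTo (reweight m m₀) (openSimplex ι) (openSimplex ι) := by
  intro ρ hρ
  have hd := weightedMass_pos hm hm₀ hρ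
  have hlast : 0 < 1 - ∑ i, reweight m m₀ ρ i := by
    rw [one_sub_sum_reweight hd.ne']
    exact div_pos (div_pos (sub_pos.2 hρ.2) hm₀) hd
  exact ⟨fun i => div_pos (div_pos (hρ.1 i) (hm i)) hd, sub_pos.1 hlast⟩

lemma weightedMass_inv_reweight (hm : ∀ i, m i ≠ 0) (hm₀ : m₀ ≠ 0)
    (hd : weightedMass m m₀ ρ ≠ 0) :
    weightedMass m⁻¹ m₀⁻¹ (reweight m m₀ ρ) = (weightedMass m m₀ ρ)⁻¹ := by
  rw [weightedMass, one_sub_sum_reweight hd]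
  simp only [reweight, Pi.inv_apply]
  field_simp [hm, hm₀]
  rw [← sum_div, mul_div_cancel₀ _ hd, add_sub_cancel]

lemma reweight_inv_reweight (hm : ∀ i, m i ≠ 0) (hm₀ : m₀ ≠ 0) (hd : weightedMass m m₀ ρ ≠ 0) :
    reweight m⁻¹ m₀⁻¹ (reweight m m₀ ρ) = ρ := by
  funext i
  rw [reweight, weightedMass_inv_reweight hm hm₀ hd, reweight, Pi.inv_apply]
  field_simp [hm i]

lemma bijOn_reweight (hm : ∀ i, 0 < m i) (hm₀ : 0 < m₀) :
    Set.BijOn (reweight m m₀) (openSimplex ι) (openSimplex ι) := by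
  have hm' : ∀ i, 0 < m⁻¹ i := fun i => inv_pos.2 (hm i)
  have hm₀' : 0 < m₀⁻¹ := inv_pos.2 hm₀
  refine Set.InvOn.bijOn ⟨fun ρ hρ => ?_, fun ρ hρ => ?_⟩ (reweight_mapsTo hm hm₀)
    (reweight_mapsTo hm' hm₀')
  · exact reweight_inv_reweight (fun i => (hm i).ne') hm₀.ne' (weightedMass_pos hm hm₀ hρ).ne'
  · simpa only [inv_inv] using reweight_inv_reweight (fun i => (hm' i).ne') hm₀'.ne'
      (weightedMass_pos hm' hm₀' hρ).ne'

end Reweight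

section EntropyVariables

variable (M : ι → ℝ) (M₀ : ℝ)

def entropyVariables (x : ι → ℝ) (i : ι) : ℝ := log (x i) / M i - log (1 - ∑ j, x j) / M₀

/-- The total molar fraction of `x_i = exp (M_i (w_i + u))`, `x_{N+1} = exp (M₀ u)`. -/
def fractionSum (w : ι → ℝ) (u : ℝ) : ℝ := ∑ i, exp (M i * (w i + u)) + exp (M₀ * u)

variable {M M₀}

lemma entropyVariables_reweight (ρ : ι → ℝ) (hd : weightedMass M M₀ ρ ≠ 0) (i : ι) :
    entropyVariables M M₀ (reweight M M₀ ρ) i =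
      log (ρ i / (weightedMass M M₀ ρ * M i)) / M i
        - log ((1 - ∑ k, ρ k) / (weightedMass M M₀ ρ * M₀)) / M₀ := by
  rw [entropyVariables, one_sub_sum_reweight hd, reweight, div_mul_eq_div_div_swap,
    div_mul_eq_div_div_swap]

lemma strictMono_fractionSum (hM : ∀ i, 0 < M i) (hM₀ : 0 < M₀) (w : ι → ℝ) :
    StrictMono (fractionSum M M₀ w) := fun u v huv =>
  add_lt_add_of_le_of_lt
    (sum_le_sum fun i _ => exp_le_exp.2 (mul_le_mul_of_nonneg_left (by linarith) (hM i).le))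
    (exp_lt_exp.2 (mul_lt_mul_of_pos_left huv hM₀))

lemma tendsto_fractionSum_atBot (hM : ∀ i, 0 < M i) (hM₀ : 0 < M₀) (w : ι → ℝ) :
    Tendsto (fractionSum M M₀ w) atBot (𝓝 0) := by
  have hexp : ∀ {a : ℝ} (b : ℝ), 0 < a → Tendsto (fun u => exp (a * (b + u))) atBot (𝓝 0) :=
    fun b ha => tendsto_exp_atBot.comp
      ((tendsto_atBot_add_const_left _ b tendsto_id).const_mul_atBot ha)
  convert (tendsto_finsetSum univ fun i _ => hexp (w i) (hM i)).add (hexp 0 hM₀) using 2 <;>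
    simp [fractionSum]

lemma exists_fractionSum_eq_one (hM : ∀ i, 0 < M i) (hM₀ : 0 < M₀) (w : ι → ℝ) :
    ∃ u, fractionSum M M₀ w u = 1 := by
  have hcont : Continuous (fractionSum M M₀ w) := by unfold fractionSum; fun_prop
  refine mem_range_of_exists_le_of_exists_ge hcont ?_ ⟨0, ?_⟩
  · exact ((tendsto_fractionSum_atBot hM hM₀ w).eventually (ge_mem_nhds one_pos)).exists
  · simpa [fractionSum] using sum_nonneg fun i _ => (exp_pos (M i * w i)).le

lemma exp_mul_entropyVariables (hM : ∀ i, M i ≠ 0) {x : ι → ℝ} (hx : x ∈ openSimplex ι)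
    (i : ι) : exp (M i * (entropyVariables M M₀ x i + log (1 - ∑ j, x j) / M₀)) = x i := by
  rw [entropyVariables, sub_add_cancel, mul_div_cancel₀ _ (hM i), exp_log (hx.1 i)]

lemma fractionSum_entropyVariables (hM : ∀ i, M i ≠ 0) (hM₀ : M₀ ≠ 0) {x : ι → ℝ}
    (hx : x ∈ openSimplex ι) :
    fractionSum M M₀ (entropyVariables M M₀ x) (log (1 - ∑ j, x j) / M₀) = 1 := by
  rw [fractionSum, mul_div_cancel₀ _ hM₀, exp_log (sub_pos.2 hx.2)]
  simp only [exp_mul_entropyVariables hM hx]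
  ring

lemma bijOn_entropyVariables (hM : ∀ i, 0 < M i) (hM₀ : 0 < M₀) :
    Set.BijOn (entropyVariables M M₀) (openSimplex ι) Set.univ := by
  have hM' : ∀ i, M i ≠ 0 := fun i => (hM i).ne'
  refine ⟨Set.mapsTo_univ _ _, fun x hx y hy hxy => ?_, fun w _ => ?_⟩
  · have hu : log (1 - ∑ j, x j) / M₀ = log (1 - ∑ j, y j) / M₀ :=
      (strictMono_fractionSum hM hM₀ _).injective <| by
        rw [fractionSum_entropyVariables hM' hM₀.ne' hx, hxy,
          fractionSum_entropyVariables hM' hM₀.ne' hy]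
    funext i
    rw [← exp_mul_entropyVariables hM' hx, ← exp_mul_entropyVariables hM' hy, hxy, hu]
  · obtain ⟨u, hu⟩ := exists_fractionSum_eq_one hM hM₀ w
    have hlast : 1 - ∑ i, exp (M i * (w i + u)) = exp (M₀ * u) := by
      rw [← hu, fractionSum]; ring
    refine ⟨fun i => exp (M i * (w i + u)), ⟨fun i => exp_pos _, ?_⟩, ?_⟩
    · linarith [exp_pos (M₀ * u)]
    · funext i
      rw [entropyVariables, hlast, log_exp, log_exp, mul_div_cancel_left₀ _ (hM' i),
        mul_div_cancel_left₀ _ hM₀.ne', add_sub_cancel_right]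

end EntropyVariables

end

theorem stmt8_general (N : ℕ) (M : Fin (N + 1) → ℝ) (hM : ∀ i, 0 < M i) :
    let S : Set (Fin N → ℝ) := {ρ | (∀ i, 0 < ρ i ∧ ρ i < 1) ∧ ∑ i, ρ i < 1}
    let c : (Fin N → ℝ) → ℝ := fun ρ =>
      (∑ i, ρ i / M i.castSucc) + (1 - ∑ i, ρ i) / M (Fin.last N)
    let W : (Fin N → ℝ) → Fin N → ℝ := fun ρ i =>
      Real.log (ρ i / (c ρ * M i.castSucc)) / M i.castSucc
        - Real.log ((1 - ∑ k, ρ k) / (c ρ * M (Fin.last N))) / M (Fin.last N)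
    Set.BijOn W S Set.univ := by
  intro S c W
  set m : Fin N → ℝ := fun i => M i.castSucc
  have hm : ∀ i, 0 < m i := fun i => hM i.castSucc
  have hS : S = openSimplex (Fin N) := openSimplex_eq_setOf_lt_one.symm
  have hW : Set.EqOn (entropyVariables m (M (Fin.last N)) ∘ reweight m (M (Fin.last N))) W S := by
    intro ρ hρ
    funext i
    rw [hS] at hρ
    exact entropyVariables_reweight ρ (weightedMass_pos hm (hM _) hρ).ne' i
  rw [hS] at hW ⊢
  exact ((bijOn_entropyVariables hm (hM _)).comp (bijOn_reweight hm (hM _))).congr hW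

/-- The entropy-variable map `W : S → ℝ^N` is a bijection from the open simplex `S`
onto all of `ℝ^N`; in particular every `w ∈ ℝ^N` comes from a unique density vector
`ρ' ∈ (0,1)^N` with `Σ ρ_i < 1`. -/
theorem stmt8 (N : ℕ) (hN : 1 ≤ N) (M : Fin (N + 1) → ℝ) (hM : ∀ i, 0 < M i) :
    let S : Set (Fin N → ℝ) := {ρ | (∀ i, 0 < ρ i ∧ ρ i < 1) ∧ ∑ i, ρ i < 1}
    let c : (Fin N → ℝ) → ℝ := fun ρ =>
      (∑ i, ρ i / M i.castSucc) + (1 - ∑ i, ρ i) / M (Fin.last N)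
    let W : (Fin N → ℝ) → Fin N → ℝ := fun ρ i =>
      Real.log (ρ i / (c ρ * M i.castSucc)) / M i.castSucc
        - Real.log ((1 - ∑ k, ρ k) / (c ρ * M (Fin.last N))) / M (Fin.last N)
    Set.BijOn W S Set.univ :=
  stmt8_general N M hM
end

section
/- Fix N ≥ 1 and molar masses M_1,…,M_{N+1} > 0. Let Ω ⊂ ℝ^d be a bounded open set, let ρ' : Ω → S be a smooth map into the open simplex S which is bounded away from the boundary of S (so that each ρ_i and ρ_{N+1} are bounded below by a positive constant), let w : Ω → ℝ^N be the associated entropy variables w_i = (ln x_i)/M_i − (ln x_{N+1})/M_{N+1}, and let u : Ω → ℝ^d be smooth and compactly supported in Ω. Then b̂(u, ρ', w) + (1/2)∫_Ω (div u)(ρ'·w) dz = −∫_Ω (div u)·(ln x_{N+1})/M_{N+1} dz; equivalently, ∫_Ω (u·∇w)·ρ' dz = ∫_Ω (div u)·(ln x_{N+1})/M_{N+1} dz. -/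
open MeasureTheory
open scoped BigOperators


set_option maxHeartbeats 2000000 in
lemma stmt12_pointwise {E : Type*} [NormedAddCommGroup E] [NormedSpace ℝ E]
    {N : ℕ} {M : Fin (N + 1) → ℝ} (hM : ∀ i, 0 < M i)
    {ρ : E → Fin N → ℝ} (hρ : ContDiff ℝ (⊤ : ℕ∞) ρ)
    {Ω : Set E} (hΩo : IsOpen Ω)
    (hpos : ∀ y ∈ Ω, (∀ i, 0 < ρ y i) ∧ 0 < 1 - ∑ i, ρ y i)
    (c : E → ℝ)
    (hc : c = fun y => (∑ i, ρ y i / M i.castSucc) + (1 - ∑ i, ρ y i) / M (Fin.last N))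
    (x : E → Fin N → ℝ) (hx : x = fun y i => ρ y i / (c y * M i.castSucc))
    (xlast : E → ℝ) (hxl : xlast = fun y => (1 - ∑ i, ρ y i) / (c y * M (Fin.last N)))
    (w : E → Fin N → ℝ)
    (hw : w = fun y i => Real.log (x y i) / M i.castSucc - Real.log (xlast y) / M (Fin.last N))
    {z : E} (hz : z ∈ Ω) :
    (∀ i, ContDiffAt ℝ (⊤ : ℕ∞) (fun y => w y i) z) ∧
    ContDiffAt ℝ (⊤ : ℕ∞) (fun y => Real.log (xlast y) / M (Fin.last N)) z ∧
    ∀ v, ∑ i, fderiv ℝ (fun y => w y i) z v * ρ z i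
        = - fderiv ℝ (fun y => Real.log (xlast y) / M (Fin.last N)) z v := by
  subst hw hxl hx hc
  have hMl : 0 < M (Fin.last N) := hM _
  have hMi : ∀ i : Fin N, 0 < M i.castSucc := fun i => hM _
  have hry : ∀ y ∈ Ω, ∀ i, 0 < ρ y i := fun y hy => (hpos y hy).1
  have hty : ∀ y ∈ Ω, 0 < 1 - ∑ i, ρ y i := fun y hy => (hpos y hy).2
  have hcy : ∀ y ∈ Ω,
      0 < (∑ i, ρ y i / M i.castSucc) + (1 - ∑ i, ρ y i) / M (Fin.last N) := fun y hy =>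
    add_pos_of_nonneg_of_pos
      (Finset.sum_nonneg fun i _ => div_nonneg (hry y hy i).le (hMi i).le)
      (div_pos (hty y hy) hMl)
  have hρi : ∀ i, ContDiff ℝ (⊤ : ℕ∞) fun y => ρ y i := fun i => contDiff_pi.mp hρ i
  have hssm : ContDiff ℝ (⊤ : ℕ∞) fun y => ∑ i, ρ y i := ContDiff.sum fun i _ => hρi i
  have hcsm : ContDiff ℝ (⊤ : ℕ∞) fun y =>
      (∑ i, ρ y i / M i.castSucc) + (1 - ∑ i, ρ y i) / M (Fin.last N) :=
    (ContDiff.sum fun i _ => (hρi i).div_const _).add ((contDiff_const.sub hssm).div_const _)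
  have hrz := hry z hz
  have htz := hty z hz
  have hcz := hcy z hz
  have hcMl : ((∑ i, ρ z i / M i.castSucc) + (1 - ∑ i, ρ z i) / M (Fin.last N))
      * M (Fin.last N) ≠ 0 := (mul_pos hcz hMl).ne'
  have hcMi : ∀ i : Fin N, ((∑ k, ρ z k / M k.castSucc) + (1 - ∑ k, ρ z k) / M (Fin.last N))
      * M i.castSucc ≠ 0 := fun i => (mul_pos hcz (hMi i)).ne'
  have hxlpos : 0 < (1 - ∑ i, ρ z i) /
      (((∑ i, ρ z i / M i.castSucc) + (1 - ∑ i, ρ z i) / M (Fin.last N)) * M (Fin.last N)) :=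
    div_pos htz (mul_pos hcz hMl)
  have hxpos : ∀ i : Fin N, 0 < ρ z i /
      (((∑ k, ρ z k / M k.castSucc) + (1 - ∑ k, ρ z k) / M (Fin.last N)) * M i.castSucc) :=
    fun i => div_pos (hrz i) (mul_pos hcz (hMi i))
  have hLc : ContDiffAt ℝ (⊤ : ℕ∞) (fun y =>
      Real.log ((1 - ∑ i, ρ y i) /
        (((∑ i, ρ y i / M i.castSucc) + (1 - ∑ i, ρ y i) / M (Fin.last N)) * M (Fin.last N)))
        / M (Fin.last N)) z := by
    refine ContDiffAt.div_const ?_ _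
    refine ContDiffAt.log ?_ hxlpos.ne'
    exact ((contDiff_const.sub hssm).contDiffAt).div
      ((hcsm.mul contDiff_const).contDiffAt) hcMl
  have hwc : ∀ i : Fin N, ContDiffAt ℝ (⊤ : ℕ∞) (fun y =>
      Real.log (ρ y i /
        (((∑ k, ρ y k / M k.castSucc) + (1 - ∑ k, ρ y k) / M (Fin.last N)) * M i.castSucc))
        / M i.castSucc
      - Real.log ((1 - ∑ k, ρ y k) /
        (((∑ k, ρ y k / M k.castSucc) + (1 - ∑ k, ρ y k) / M (Fin.last N)) * M (Fin.last N)))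
        / M (Fin.last N)) z := by
    intro i
    refine ContDiffAt.sub ?_ hLc
    refine ContDiffAt.div_const ?_ _
    refine ContDiffAt.log ?_ (hxpos i).ne'
    exact ((hρi i).contDiffAt).div ((hcsm.mul contDiff_const).contDiffAt) (hcMi i)
  refine ⟨hwc, hLc, ?_⟩
  set D : Fin N → E →L[ℝ] ℝ := fun i => fderiv ℝ (fun y => ρ y i) z with hD
  have hDi : ∀ i, HasFDerivAt (fun y => ρ y i) (D i) z := fun i =>
    ((hρi i).differentiable (by simp) z).hasFDerivAt
  have hsD : HasFDerivAt (fun y => ∑ i, ρ y i) (∑ i, D i) z :=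
    HasFDerivAt.fun_sum fun i _ => hDi i
  have h1 : HasFDerivAt (fun y => ∑ i, ρ y i / M i.castSucc)
      (∑ i, (M i.castSucc)⁻¹ • D i) z :=
    HasFDerivAt.fun_sum fun i _ => by
      simpa [div_eq_mul_inv] using (hDi i).mul_const (M i.castSucc)⁻¹
  have h2 : HasFDerivAt (fun y => (1 - ∑ i, ρ y i) / M (Fin.last N))
      ((M (Fin.last N))⁻¹ • -(∑ i, D i)) z := by
    simpa [div_eq_mul_inv] using (hsD.const_sub 1).mul_const (M (Fin.last N))⁻¹
  have hcD : HasFDerivAt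
      (fun y => (∑ i, ρ y i / M i.castSucc) + (1 - ∑ i, ρ y i) / M (Fin.last N))
      ((∑ i, (M i.castSucc)⁻¹ • D i) + (M (Fin.last N))⁻¹ • -(∑ i, D i)) z := h1.add h2
  set Cz : E →L[ℝ] ℝ := (∑ i, (M i.castSucc)⁻¹ • D i) + (M (Fin.last N))⁻¹ • -(∑ i, D i)
    with hCzdef
  set cz : ℝ := (∑ i, ρ z i / M i.castSucc) + (1 - ∑ i, ρ z i) / M (Fin.last N) with hczdef
  have hlρ : ∀ i, HasFDerivAt (fun y => Real.log (ρ y i)) ((ρ z i)⁻¹ • D i) z := fun i =>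
    (hDi i).log (hrz i).ne'
  have hlc : HasFDerivAt (fun y =>
      Real.log ((∑ i, ρ y i / M i.castSucc) + (1 - ∑ i, ρ y i) / M (Fin.last N)))
      (cz⁻¹ • Cz) z := hcD.log hcz.ne'
  have hl1 : HasFDerivAt (fun y => Real.log (1 - ∑ i, ρ y i))
      ((1 - ∑ i, ρ z i)⁻¹ • -(∑ i, D i)) z := (hsD.const_sub 1).log htz.ne'
  -- the tilde functions
  have hLt : HasFDerivAt (fun y =>
      (Real.log (1 - ∑ k, ρ y k)
        - Real.log ((∑ k, ρ y k / M k.castSucc) + (1 - ∑ k, ρ y k) / M (Fin.last N))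
        - Real.log (M (Fin.last N))) * (M (Fin.last N))⁻¹)
      ((M (Fin.last N))⁻¹ • (((1 - ∑ i, ρ z i)⁻¹ • -(∑ i, D i)) - cz⁻¹ • Cz)) z :=
    ((hl1.sub hlc).sub_const _).mul_const _
  have hwt : ∀ i : Fin N, HasFDerivAt (fun y =>
      (Real.log (ρ y i)
        - Real.log ((∑ k, ρ y k / M k.castSucc) + (1 - ∑ k, ρ y k) / M (Fin.last N))
        - Real.log (M i.castSucc)) * (M i.castSucc)⁻¹
      - (Real.log (1 - ∑ k, ρ y k)
        - Real.log ((∑ k, ρ y k / M k.castSucc) + (1 - ∑ k, ρ y k) / M (Fin.last N))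
        - Real.log (M (Fin.last N))) * (M (Fin.last N))⁻¹)
      (((M i.castSucc)⁻¹ • (((ρ z i)⁻¹ • D i) - cz⁻¹ • Cz))
        - ((M (Fin.last N))⁻¹ • (((1 - ∑ i, ρ z i)⁻¹ • -(∑ i, D i)) - cz⁻¹ • Cz))) z :=
    fun i => ((((hlρ i).sub hlc).sub_const _).mul_const _).sub hLt
  -- eventual equalities
  have hLeq : (fun y =>
      Real.log ((1 - ∑ k, ρ y k) /
        (((∑ k, ρ y k / M k.castSucc) + (1 - ∑ k, ρ y k) / M (Fin.last N)) * M (Fin.last N)))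
        / M (Fin.last N))
      =ᶠ[nhds z] (fun y =>
      (Real.log (1 - ∑ k, ρ y k)
        - Real.log ((∑ k, ρ y k / M k.castSucc) + (1 - ∑ k, ρ y k) / M (Fin.last N))
        - Real.log (M (Fin.last N))) * (M (Fin.last N))⁻¹) := by
    filter_upwards [hΩo.mem_nhds hz] with y hy
    rw [Real.log_div (hty y hy).ne' (mul_ne_zero (hcy y hy).ne' hMl.ne'),
      Real.log_mul (hcy y hy).ne' hMl.ne']
    ring
  have hweq : ∀ i : Fin N, (fun y =>
      Real.log (ρ y i /
        (((∑ k, ρ y k / M k.castSucc) + (1 - ∑ k, ρ y k) / M (Fin.last N)) * M i.castSucc))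
        / M i.castSucc
      - Real.log ((1 - ∑ k, ρ y k) /
        (((∑ k, ρ y k / M k.castSucc) + (1 - ∑ k, ρ y k) / M (Fin.last N)) * M (Fin.last N)))
        / M (Fin.last N))
      =ᶠ[nhds z] (fun y =>
      (Real.log (ρ y i)
        - Real.log ((∑ k, ρ y k / M k.castSucc) + (1 - ∑ k, ρ y k) / M (Fin.last N))
        - Real.log (M i.castSucc)) * (M i.castSucc)⁻¹
      - (Real.log (1 - ∑ k, ρ y k)
        - Real.log ((∑ k, ρ y k / M k.castSucc) + (1 - ∑ k, ρ y k) / M (Fin.last N))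
        - Real.log (M (Fin.last N))) * (M (Fin.last N))⁻¹) := by
    intro i
    filter_upwards [hΩo.mem_nhds hz] with y hy
    rw [Real.log_div (hry y hy i).ne' (mul_ne_zero (hcy y hy).ne' (hMi i).ne'),
      Real.log_mul (hcy y hy).ne' (hMi i).ne',
      Real.log_div (hty y hy).ne' (mul_ne_zero (hcy y hy).ne' hMl.ne'),
      Real.log_mul (hcy y hy).ne' hMl.ne']
    ring
  have hLD : HasFDerivAt (fun y =>
      Real.log ((1 - ∑ k, ρ y k) /
        (((∑ k, ρ y k / M k.castSucc) + (1 - ∑ k, ρ y k) / M (Fin.last N)) * M (Fin.last N)))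
        / M (Fin.last N))
      ((M (Fin.last N))⁻¹ • (((1 - ∑ i, ρ z i)⁻¹ • -(∑ i, D i)) - cz⁻¹ • Cz)) z :=
    hLt.congr_of_eventuallyEq hLeq
  have hwD : ∀ i : Fin N, HasFDerivAt (fun y =>
      Real.log (ρ y i /
        (((∑ k, ρ y k / M k.castSucc) + (1 - ∑ k, ρ y k) / M (Fin.last N)) * M i.castSucc))
        / M i.castSucc
      - Real.log ((1 - ∑ k, ρ y k) /
        (((∑ k, ρ y k / M k.castSucc) + (1 - ∑ k, ρ y k) / M (Fin.last N)) * M (Fin.last N)))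
        / M (Fin.last N))
      (((M i.castSucc)⁻¹ • (((ρ z i)⁻¹ • D i) - cz⁻¹ • Cz))
        - ((M (Fin.last N))⁻¹ • (((1 - ∑ i, ρ z i)⁻¹ • -(∑ i, D i)) - cz⁻¹ • Cz))) z :=
    fun i => (hwt i).congr_of_eventuallyEq (hweq i)
  intro v
  rw [hLD.fderiv]
  rw [Finset.sum_congr rfl (fun i _ => by rw [(hwD i).fderiv])]
  simp only [ContinuousLinearMap.smul_apply, ContinuousLinearMap.sub_apply,
    ContinuousLinearMap.add_apply, ContinuousLinearMap.neg_apply,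
    ContinuousLinearMap.coe_sum', Finset.sum_apply, smul_eq_mul]
  set A := ∑ k, (D k) v with hA
  set K := ∑ k, (M k.castSucc)⁻¹ * (D k) v with hK
  set S := ∑ i, ρ z i with hS
  set Sρ := ∑ i, ρ z i / M i.castSucc with hSρ
  have hCV : Cz v = K + (M (Fin.last N))⁻¹ * -A := by
    rw [hCzdef]
    simp only [ContinuousLinearMap.add_apply, ContinuousLinearMap.smul_apply,
      ContinuousLinearMap.coe_sum', Finset.sum_apply, ContinuousLinearMap.neg_apply,
      smul_eq_mul, hK, hA]
  have hsum_eq : ∀ i ∈ Finset.univ, ((M i.castSucc)⁻¹ * ((ρ z i)⁻¹ * (D i) v - cz⁻¹ * (Cz v))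
      - (M (Fin.last N))⁻¹ * ((1 - S)⁻¹ * -A - cz⁻¹ * Cz v)) * ρ z i
      = (M i.castSucc)⁻¹ * (D i) v - (cz⁻¹ * Cz v) * (ρ z i / M i.castSucc)
        - ((M (Fin.last N))⁻¹ * ((1 - S)⁻¹ * -A - cz⁻¹ * Cz v)) * ρ z i := by
    intro i _
    have h1 : ρ z i ≠ 0 := (hrz i).ne'
    have h2 : M i.castSucc ≠ 0 := (hMi i).ne'
    field_simp
  rw [Finset.sum_congr rfl hsum_eq, Finset.sum_sub_distrib, Finset.sum_sub_distrib,
    ← Finset.mul_sum, ← Finset.mul_sum, ← hK, ← hSρ, ← hS, hCV]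
  have hSρval : Sρ = cz - (1 - S) / M (Fin.last N) := by rw [hczdef]; ring
  rw [hSρval]
  have h3 : cz ≠ 0 := hcz.ne'
  have h4 : (1 : ℝ) - S ≠ 0 := htz.ne'
  have h5 : M (Fin.last N) ≠ 0 := hMl.ne'
  field_simp
  ring


lemma stmt12_intfd {d : ℕ} (g : EuclideanSpace ℝ (Fin d) → ℝ) (hg : ContDiff ℝ (⊤ : ℕ∞) g)
    (hgs : HasCompactSupport g) (v : EuclideanSpace ℝ (Fin d)) :
    ∫ x, fderiv ℝ g x v = 0 := by
  have h2 : Integrable (fun x => fderiv ℝ g x v) volume := by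
    have hc : Continuous (fun x => fderiv ℝ g x v) :=
      (hg.continuous_fderiv (by simp)).clm_apply continuous_const
    have hs : HasCompactSupport (fun x => fderiv ℝ g x v) :=
      (hgs.fderiv ℝ).comp_left (g := fun L : _ →L[ℝ] ℝ => L v) rfl
    exact hc.integrable_of_hasCompactSupport hs
  have h := integral_mul_fderiv_eq_neg_fderiv_mul_of_integrable (μ := volume)
    (f := fun _ => (1:ℝ)) (g := g) (v := v)
    (by simp)
    (by simpa using h2)
    (by simpa using hg.continuous.integrable_of_hasCompactSupport hgs)
    (fun x _ => differentiableAt_const 1) (fun x _ => hg.differentiable (by simp) x)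
  simpa using h

lemma stmt12_div_aux {d : ℕ} {Ω : Set (EuclideanSpace ℝ (Fin d))} (hΩo : IsOpen Ω)
    {u : EuclideanSpace ℝ (Fin d) → EuclideanSpace ℝ (Fin d)}
    (hu : ContDiff ℝ (⊤ : ℕ∞) u) (husupp : HasCompactSupport u) (huΩ : tsupport u ⊆ Ω)
    {F : EuclideanSpace ℝ (Fin d) → ℝ} (hF : ∀ z ∈ Ω, ContDiffAt ℝ (⊤ : ℕ∞) F z) :
    IntegrableOn (fun z => ∑ j, u z j * fderiv ℝ F z (EuclideanSpace.single j 1)) Ω volume ∧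
    IntegrableOn (fun z =>
      (∑ j, fderiv ℝ (fun y => u y j) z (EuclideanSpace.single j 1)) * F z) Ω volume ∧
    (∫ z in Ω, (∑ j, fderiv ℝ (fun y => u y j) z (EuclideanSpace.single j 1)) * F z)
      = - ∫ z in Ω, ∑ j, u z j * fderiv ℝ F z (EuclideanSpace.single j 1) := by
  have huj : ∀ j, ContDiff ℝ (⊤ : ℕ∞) (fun y => u y j) := fun j => contDiff_euclidean.mp hu j
  have hloc : ∀ z ∉ tsupport u, ∀ᶠ y in nhds z, u y = 0 := by
    intro z hz
    filter_upwards [(isClosed_tsupport u).isOpen_compl.mem_nhds hz] with y hy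
    exact image_eq_zero_of_notMem_tsupport hy
  have hlocj : ∀ z ∉ tsupport u, ∀ j, (fun y => u y j) =ᶠ[nhds z] (fun _ => 0) := by
    intro z hz j
    filter_upwards [hloc z hz] with y hy
    simp [hy]
  have hduj : ∀ z ∉ tsupport u, ∀ j, fderiv ℝ (fun y => u y j) z = 0 := by
    intro z hz j
    rw [(hlocj z hz j).fderiv_eq]
    exact fderiv_const_apply 0
  have huj0 : ∀ z ∉ tsupport u, ∀ j, u z j = 0 := by
    intro z hz j; simp [image_eq_zero_of_notMem_tsupport hz]
  -- the products u_j * F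
  have hgsm : ∀ j, ContDiff ℝ (⊤ : ℕ∞) (fun z => u z j * F z) := by
    intro j
    rw [contDiff_iff_contDiffAt]
    intro z
    by_cases hz : z ∈ Ω
    · exact ((huj j).contDiffAt).mul (hF z hz)
    · have hz' : z ∉ tsupport u := fun h => hz (huΩ h)
      have he : (fun z => u z j * F z) =ᶠ[nhds z] (fun _ => 0) := by
        filter_upwards [hlocj z hz' j] with y hy
        simp [hy]
      exact ContDiffAt.congr_of_eventuallyEq contDiffAt_const he
  have hgsupp : ∀ j, HasCompactSupport (fun z => u z j * F z) := by
    intro j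
    apply HasCompactSupport.intro husupp
    intro z hz
    simp [huj0 z hz j]
  have hgd0 : ∀ z ∉ tsupport u, ∀ j,
      fderiv ℝ (fun y => u y j * F y) z = 0 := by
    intro z hz j
    have he : (fun y => u y j * F y) =ᶠ[nhds z] (fun _ => 0) := by
      filter_upwards [hlocj z hz j] with y hy; simp [hy]
    rw [he.fderiv_eq]; exact fderiv_const_apply 0
  -- pointwise identity
  have hpt : ∀ z, ∑ j, fderiv ℝ (fun y => u y j * F y) z (EuclideanSpace.single j 1)
      = (∑ j, fderiv ℝ (fun y => u y j) z (EuclideanSpace.single j 1)) * F z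
        + ∑ j, u z j * fderiv ℝ F z (EuclideanSpace.single j 1) := by
    intro z
    by_cases hz : z ∈ Ω
    · have hFd : DifferentiableAt ℝ F z := (hF z hz).differentiableAt (by simp)
      have h1 : ∀ j ∈ Finset.univ,
          fderiv ℝ (fun y => u y j * F y) z (EuclideanSpace.single j 1)
          = u z j * fderiv ℝ F z (EuclideanSpace.single j 1)
            + fderiv ℝ (fun y => u y j) z (EuclideanSpace.single j 1) * F z := by
        intro j _
        rw [fderiv_fun_mul ((huj j).differentiable (by simp) z) hFd]
        simp [smul_eq_mul, mul_comm]
      rw [Finset.sum_congr rfl h1, Finset.sum_add_distrib, Finset.sum_mul]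
      ring
    · have hz' : z ∉ tsupport u := fun h => hz (huΩ h)
      simp [hgd0 z hz', hduj z hz', huj0 z hz']
  -- integrals of the derivatives vanish
  have hint : ∀ j, ∫ z, fderiv ℝ (fun y => u y j * F y) z (EuclideanSpace.single j 1) = 0 :=
    fun j => stmt12_intfd _ (hgsm j) (hgsupp j) _
  have hintg : ∀ j, Integrable
      (fun z => fderiv ℝ (fun y => u y j * F y) z (EuclideanSpace.single j 1)) volume := by
    intro j
    have hc : Continuous (fun z => fderiv ℝ (fun y => u y j * F y) z (EuclideanSpace.single j 1)) :=
      ((hgsm j).continuous_fderiv (by simp)).clm_apply continuous_const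
    have hs : HasCompactSupport
        (fun z => fderiv ℝ (fun y => u y j * F y) z (EuclideanSpace.single j 1)) :=
      (((hgsupp j).fderiv ℝ).comp_left (g := fun L : _ →L[ℝ] ℝ => L _) rfl)
    exact hc.integrable_of_hasCompactSupport hs
  -- continuity and compact support of the two main integrands
  have hAcont : Continuous (fun z =>
      (∑ j, fderiv ℝ (fun y => u y j) z (EuclideanSpace.single j 1)) * F z) := by
    rw [continuous_iff_continuousAt]
    intro z
    by_cases hz : z ∈ Ω
    · have h1 : Continuous (fun z => ∑ j, fderiv ℝ (fun y => u y j) z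
          (EuclideanSpace.single j 1)) :=
        continuous_finset_sum _ fun j _ =>
          ((huj j).continuous_fderiv (by simp)).clm_apply continuous_const
      exact h1.continuousAt.mul (hF z hz).continuousAt
    · have hz' : z ∉ tsupport u := fun h => hz (huΩ h)
      have he : (fun z => (∑ j, fderiv ℝ (fun y => u y j) z (EuclideanSpace.single j 1)) * F z)
          =ᶠ[nhds z] (fun _ => 0) := by
        filter_upwards [(isClosed_tsupport u).isOpen_compl.mem_nhds hz'] with y hy
        simp [hduj y hy]
      exact ContinuousAt.congr continuousAt_const he.symm
  have hBcont : Continuous (fun z =>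
      ∑ j, u z j * fderiv ℝ F z (EuclideanSpace.single j 1)) := by
    rw [continuous_iff_continuousAt]
    intro z
    by_cases hz : z ∈ Ω
    · refine tendsto_finset_sum _ fun j _ => ?_
      apply ((huj j).continuous.continuousAt).mul
      have h := ((hF z hz).fderiv_right (m := (⊤ : ℕ∞)) (by simp)).continuousAt
      exact ((ContinuousLinearMap.apply ℝ ℝ
        (EuclideanSpace.single j 1)).continuous.continuousAt.comp h : _)
    · have hz' : z ∉ tsupport u := fun h => hz (huΩ h)
      have he : (fun z => ∑ j, u z j * fderiv ℝ F z (EuclideanSpace.single j 1))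
          =ᶠ[nhds z] (fun _ => 0) := by
        filter_upwards [hloc z hz'] with y hy
        simp [hy]
      exact ContinuousAt.congr continuousAt_const he.symm
  have hAsupp : HasCompactSupport (fun z =>
      (∑ j, fderiv ℝ (fun y => u y j) z (EuclideanSpace.single j 1)) * F z) := by
    apply HasCompactSupport.intro husupp
    intro z hz
    simp [hduj z hz]
  have hBsupp : HasCompactSupport (fun z =>
      ∑ j, u z j * fderiv ℝ F z (EuclideanSpace.single j 1)) := by
    apply HasCompactSupport.intro husupp
    intro z hz
    simp [huj0 z hz]
  have hAint : Integrable (fun z =>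
      (∑ j, fderiv ℝ (fun y => u y j) z (EuclideanSpace.single j 1)) * F z) volume :=
    hAcont.integrable_of_hasCompactSupport hAsupp
  have hBint : Integrable (fun z =>
      ∑ j, u z j * fderiv ℝ F z (EuclideanSpace.single j 1)) volume :=
    hBcont.integrable_of_hasCompactSupport hBsupp
  -- zero off Ω
  have hA0 : ∀ z ∉ Ω,
      (∑ j, fderiv ℝ (fun y => u y j) z (EuclideanSpace.single j 1)) * F z = 0 := by
    intro z hz
    have hz' : z ∉ tsupport u := fun h => hz (huΩ h)
    simp [hduj z hz']
  have hB0 : ∀ z ∉ Ω, ∑ j, u z j * fderiv ℝ F z (EuclideanSpace.single j 1) = 0 := by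
    intro z hz
    have hz' : z ∉ tsupport u := fun h => hz (huΩ h)
    simp [huj0 z hz']
  refine ⟨hBint.integrableOn, hAint.integrableOn, ?_⟩
  rw [setIntegral_eq_integral_of_forall_compl_eq_zero hA0,
    setIntegral_eq_integral_of_forall_compl_eq_zero hB0]
  have hsum : (∫ z, (∑ j, fderiv ℝ (fun y => u y j) z (EuclideanSpace.single j 1)) * F z)
      + ∫ z, ∑ j, u z j * fderiv ℝ F z (EuclideanSpace.single j 1) = 0 := by
    rw [← integral_add hAint hBint]
    have : ∀ z, (∑ j, fderiv ℝ (fun y => u y j) z (EuclideanSpace.single j 1)) * F z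
        + (∑ j, u z j * fderiv ℝ F z (EuclideanSpace.single j 1))
        = ∑ j, fderiv ℝ (fun y => u y j * F y) z (EuclideanSpace.single j 1) :=
      fun z => (hpt z).symm
    rw [integral_congr_ae (Filter.Eventually.of_forall this)]
    rw [integral_finset_sum _ (fun j _ => hintg j)]
    exact Finset.sum_eq_zero fun j _ => hint j
  linarith

/-- The key identity
`b̂(u, ρ', w) + (1/2)∫_Ω (div u)(ρ'·w) = −∫_Ω (div u) (ln x_{N+1})/M_{N+1}`,
equivalently `∫_Ω (u·∇w)·ρ' = ∫_Ω (div u) (ln x_{N+1})/M_{N+1}`, where `w` are the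
entropy variables associated to a smooth density map `ρ'` with values in the open
simplex and bounded away from its boundary, and `u` is smooth and compactly supported
in `Ω`. -/
theorem stmt12 (d N : ℕ) (hd : 1 ≤ d) (hN : 1 ≤ N)
    (M : Fin (N + 1) → ℝ) (hM : ∀ i, 0 < M i)
    (Ω : Set (EuclideanSpace ℝ (Fin d))) (hΩo : IsOpen Ω) (hΩb : Bornology.IsBounded Ω)
    (ρ : EuclideanSpace ℝ (Fin d) → Fin N → ℝ) (hρ : ContDiff ℝ (⊤ : ℕ∞) ρ)
    (α : ℝ) (hα : 0 < α)
    (hρα : ∀ z ∈ Ω, (∀ i, α ≤ ρ z i) ∧ α ≤ 1 - ∑ i, ρ z i)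
    (u : EuclideanSpace ℝ (Fin d) → EuclideanSpace ℝ (Fin d))
    (hu : ContDiff ℝ (⊤ : ℕ∞) u) (husupp : HasCompactSupport u) (huΩ : tsupport u ⊆ Ω) :
    let c : EuclideanSpace ℝ (Fin d) → ℝ := fun z =>
      (∑ i, ρ z i / M i.castSucc) + (1 - ∑ i, ρ z i) / M (Fin.last N)
    let x : EuclideanSpace ℝ (Fin d) → Fin N → ℝ := fun z i =>
      ρ z i / (c z * M i.castSucc)
    let xlast : EuclideanSpace ℝ (Fin d) → ℝ := fun z =>
      (1 - ∑ i, ρ z i) / (c z * M (Fin.last N))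
    let w : EuclideanSpace ℝ (Fin d) → Fin N → ℝ := fun z i =>
      Real.log (x z i) / M i.castSucc - Real.log (xlast z) / M (Fin.last N)
    let divu : EuclideanSpace ℝ (Fin d) → ℝ := fun z =>
      ∑ j, fderiv ℝ (fun y => u y j) z (EuclideanSpace.single j 1)
    (((∫ z in Ω, ∑ i,
          (∑ j, u z j * fderiv ℝ (fun y => ρ y i) z (EuclideanSpace.single j 1)) * w z i)
        + (1 / 2) * ∫ z in Ω, divu z * (∑ i, ρ z i * w z i))
        + (1 / 2) * ∫ z in Ω, divu z * (∑ i, ρ z i * w z i))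
      = -∫ z in Ω, divu z * (Real.log (xlast z) / M (Fin.last N))
    ∧ (∫ z in Ω, ∑ i,
          (∑ j, u z j * fderiv ℝ (fun y => w y i) z (EuclideanSpace.single j 1)) * ρ z i)
      = ∫ z in Ω, divu z * (Real.log (xlast z) / M (Fin.last N)) := by
  intro c x xlast w divu
  have hdivu : divu = fun z =>
      ∑ j, fderiv ℝ (fun y => u y j) z (EuclideanSpace.single j 1) := rfl
  simp only [hdivu]
  have hpos : ∀ y ∈ Ω, (∀ i, 0 < ρ y i) ∧ 0 < 1 - ∑ i, ρ y i := fun y hy =>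
    ⟨fun i => lt_of_lt_of_le hα ((hρα y hy).1 i), lt_of_lt_of_le hα (hρα y hy).2⟩
  have key : ∀ z ∈ Ω,
      (∀ i, ContDiffAt ℝ (⊤ : ℕ∞) (fun y => w y i) z) ∧
      ContDiffAt ℝ (⊤ : ℕ∞) (fun y => Real.log (xlast y) / M (Fin.last N)) z ∧
      ∀ v, ∑ i, fderiv ℝ (fun y => w y i) z v * ρ z i
          = - fderiv ℝ (fun y => Real.log (xlast y) / M (Fin.last N)) z v :=
    fun z hz => stmt12_pointwise hM hρ hΩo hpos c rfl x rfl xlast rfl w rfl hz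
  have hLc : ∀ z ∈ Ω, ContDiffAt ℝ (⊤ : ℕ∞) (fun y => Real.log (xlast y) / M (Fin.last N)) z :=
    fun z hz => (key z hz).2.1
  have hPc : ∀ z ∈ Ω, ContDiffAt ℝ (⊤ : ℕ∞) (fun y => ∑ i, ρ y i * w y i) z := fun z hz =>
    ContDiffAt.sum fun i _ =>
      ((contDiff_pi.mp hρ i).contDiffAt).mul ((key z hz).1 i)
  have dL : IntegrableOn (fun z => ∑ j, u z j *
        fderiv ℝ (fun y => Real.log (xlast y) / M (Fin.last N)) z
          (EuclideanSpace.single j 1)) Ω volume ∧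
      IntegrableOn (fun z => (∑ j, fderiv ℝ (fun y => u y j) z (EuclideanSpace.single j 1))
        * (Real.log (xlast z) / M (Fin.last N))) Ω volume ∧
      (∫ z in Ω, (∑ j, fderiv ℝ (fun y => u y j) z (EuclideanSpace.single j 1))
          * (Real.log (xlast z) / M (Fin.last N)))
        = - ∫ z in Ω, ∑ j, u z j *
            fderiv ℝ (fun y => Real.log (xlast y) / M (Fin.last N)) z
              (EuclideanSpace.single j 1) :=
    stmt12_div_aux hΩo hu husupp huΩ hLc
  have dP : IntegrableOn (fun z => ∑ j, u z j *
        fderiv ℝ (fun y => ∑ i, ρ y i * w y i) z (EuclideanSpace.single j 1)) Ω volume ∧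
      IntegrableOn (fun z => (∑ j, fderiv ℝ (fun y => u y j) z (EuclideanSpace.single j 1))
        * (∑ i, ρ z i * w z i)) Ω volume ∧
      (∫ z in Ω, (∑ j, fderiv ℝ (fun y => u y j) z (EuclideanSpace.single j 1))
          * (∑ i, ρ z i * w z i))
        = - ∫ z in Ω, ∑ j, u z j *
            fderiv ℝ (fun y => ∑ i, ρ y i * w y i) z (EuclideanSpace.single j 1) :=
    stmt12_div_aux hΩo hu husupp huΩ hPc
  have I2 : ∀ z ∈ Ω,
      (∑ i, (∑ j, u z j * fderiv ℝ (fun y => w y i) z (EuclideanSpace.single j 1)) * ρ z i)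
      = - ∑ j, u z j * fderiv ℝ (fun y => Real.log (xlast y) / M (Fin.last N)) z
          (EuclideanSpace.single j 1) := by
    intro z hz
    have hC := (key z hz).2.2
    have hswap : (∑ i, (∑ j, u z j * fderiv ℝ (fun y => w y i) z
          (EuclideanSpace.single j 1)) * ρ z i)
        = ∑ j, u z j * ∑ i, fderiv ℝ (fun y => w y i) z (EuclideanSpace.single j 1) * ρ z i := by
      simp only [Finset.sum_mul]
      rw [Finset.sum_comm]
      simp only [mul_assoc, ← Finset.mul_sum]
    rw [hswap]
    rw [Finset.sum_congr rfl fun j (_ : j ∈ Finset.univ) => by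
      rw [hC (EuclideanSpace.single j 1)]]
    simp [mul_neg]
  have I1 : ∀ z ∈ Ω,
      (∑ i, (∑ j, u z j * fderiv ℝ (fun y => ρ y i) z (EuclideanSpace.single j 1)) * w z i)
      = (∑ j, u z j * fderiv ℝ (fun y => ∑ i, ρ y i * w y i) z (EuclideanSpace.single j 1))
        + (∑ j, u z j * fderiv ℝ (fun y => Real.log (xlast y) / M (Fin.last N)) z
            (EuclideanSpace.single j 1)) := by
    intro z hz
    have hC := (key z hz).2.2
    have hwd : ∀ i, DifferentiableAt ℝ (fun y => w y i) z := fun i =>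
      ((key z hz).1 i).differentiableAt (by simp)
    have hρd : ∀ i, DifferentiableAt ℝ (fun y => ρ y i) z := fun i =>
      (contDiff_pi.mp hρ i).differentiable (by simp) z
    have hfP : ∀ v : EuclideanSpace ℝ (Fin d),
        fderiv ℝ (fun y => ∑ i, ρ y i * w y i) z v
        = ∑ i, (fderiv ℝ (fun y => ρ y i) z v * w z i
            + ρ z i * fderiv ℝ (fun y => w y i) z v) := by
      intro v
      rw [fderiv_fun_sum (A := fun i y => ρ y i * w y i) (fun i _ => (hρd i).mul (hwd i))]
      simp only [ContinuousLinearMap.coe_sum', Finset.sum_apply]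
      refine Finset.sum_congr rfl fun i _ => ?_
      rw [fderiv_fun_mul (hρd i) (hwd i)]
      simp only [ContinuousLinearMap.add_apply, ContinuousLinearMap.smul_apply, smul_eq_mul]
      ring
    have hswap : (∑ i, (∑ j, u z j * fderiv ℝ (fun y => ρ y i) z
          (EuclideanSpace.single j 1)) * w z i)
        = ∑ j, u z j * ∑ i, fderiv ℝ (fun y => ρ y i) z (EuclideanSpace.single j 1) * w z i := by
      simp only [Finset.sum_mul]
      rw [Finset.sum_comm]
      simp only [mul_assoc, ← Finset.mul_sum]
    rw [hswap, ← Finset.sum_add_distrib]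
    refine Finset.sum_congr rfl fun j _ => ?_
    rw [hfP (EuclideanSpace.single j 1), Finset.sum_add_distrib]
    have hmid : ∑ i, ρ z i * fderiv ℝ (fun y => w y i) z (EuclideanSpace.single j 1)
        = - fderiv ℝ (fun y => Real.log (xlast y) / M (Fin.last N)) z
            (EuclideanSpace.single j 1) := by
      rw [← hC (EuclideanSpace.single j 1)]
      exact Finset.sum_congr rfl fun i _ => mul_comm _ _
    rw [hmid]
    ring
  have eq2 : (∫ z in Ω, ∑ i, (∑ j, u z j * fderiv ℝ (fun y => w y i) z
        (EuclideanSpace.single j 1)) * ρ z i)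
      = ∫ z in Ω, (∑ j, fderiv ℝ (fun y => u y j) z (EuclideanSpace.single j 1))
          * (Real.log (xlast z) / M (Fin.last N)) := by
    rw [setIntegral_congr_fun hΩo.measurableSet fun z hz => I2 z hz]
    rw [integral_neg]
    linarith [dL.2.2]
  have eq1 : (∫ z in Ω, ∑ i, (∑ j, u z j * fderiv ℝ (fun y => ρ y i) z
        (EuclideanSpace.single j 1)) * w z i)
      = - (∫ z in Ω, (∑ j, fderiv ℝ (fun y => u y j) z (EuclideanSpace.single j 1))
            * (∑ i, ρ z i * w z i))
        - ∫ z in Ω, (∑ j, fderiv ℝ (fun y => u y j) z (EuclideanSpace.single j 1))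
            * (Real.log (xlast z) / M (Fin.last N)) := by
    rw [setIntegral_congr_fun hΩo.measurableSet fun z hz => I1 z hz]
    rw [integral_add dP.1 dL.1]
    linarith [dP.2.2, dL.2.2]
  constructor
  · linarith [eq1]
  · exact eq2
end
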